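/- arXiv:2201.02917 — 6 statements merged into one kernel-verified Lean document; each statement's English description precedes it below -/
import Mathlib

section
/- Suppose for each j ∈ [1,n] we are given a polynomial F_j ∈ R[x_1,…,x_n] not involving x_j, irreducible in R[x_1,…,x_n] and not divisible by any variable x_i, a monomial M_j in the variables {x_i : i ≠ j}, and we set F̂_j = F_j/M_j and x'_j = F̂_j/x_j ∈ 𝔽. Then the upper bound satisfies U(Σ) := R[x_1^{±1},…,x_n^{±1}] ∩ ⋂_{i=1}^n R[𝐱_i^{±1}] = ⋂_{j=1}^n R[x_1^{±1},…,x_{j-1}^{±1}, x_j, x'_j, x_{j+1}^{±1},…,x_n^{±1}]. -/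
open MvPolynomial

/-- The ambient field `𝔽 = Frac(R[x_1, …, x_n])`. -/
noncomputable abbrev AmbientField (R : Type*) [CommRing R] [IsDomain R] (n : ℕ) :=
  FractionRing (MvPolynomial (Fin n) R)

/-- The cluster variable `x_i` viewed inside the ambient field. -/
noncomputable def xv (R : Type*) [CommRing R] [IsDomain R] {n : ℕ} (i : Fin n) :
    AmbientField R n :=
  algebraMap (MvPolynomial (Fin n) R) (AmbientField R n) (MvPolynomial.X i)

/-- The canonical embedding of polynomials into the ambient field. -/
noncomputable def toAmbient (R : Type*) [CommRing R] [IsDomain R] {n : ℕ}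
    (F : MvPolynomial (Fin n) R) : AmbientField R n :=
  algebraMap (MvPolynomial (Fin n) R) (AmbientField R n) F

/-
It suffices to show `R[𝐱^{±1}] ∩ R[𝐱_j^{±1}] = R[…, x_j, x'_j, …]` for each `j`. Let `K` be the
ring of elements of `𝔽` algebraic over `R[x_i : i ≠ j]`: it contains the `x_i^{±1}` (`i ≠ j`),
`F̂_j` and `F̂_j⁻¹`, and `x_j` is transcendental over it. Split an element `y` of the left side as
`y = a + x_j⁻¹ b` with `a ∈ R[…, x_j, …]` and `b` a polynomial in `x_j⁻¹`. Then `x_j⁻¹ b` lies in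
`R[𝐱_j^{±1}]` and splits in turn as `c + x'_j⁻¹ e` with `c ∈ R[…, x'_j, …]`. Since
`x'_j⁻¹ = F̂_j⁻¹ x_j`, the element `x'_j⁻¹ e = x_j⁻¹ b - c` lies both in `x_j K[x_j]` and in
`K[x_j⁻¹]`, and these meet only in `0` because `x_j` is transcendental over `K`.
-/

theorem Transcendental.ne_zero {K F : Type*} [CommRing K] [Field F] [Algebra K F] {x : F}
    (hx : Transcendental K x) : x ≠ 0 := by
  have := (algebraMap K F).domain_nontrivial
  rintro rfl
  exact hx isAlgebraic_zero

theorem eq_zero_of_mem_adjoin_inv_of_eq_mul {K F : Type*} [CommRing K] [Field F] [Algebra K F]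
    {x v w : F} (hx : Transcendental K x) (hv : v ∈ Algebra.adjoin K {x⁻¹})
    (hw : w ∈ Algebra.adjoin K {x}) (h : v = x * w) : w = 0 := by
  rw [Algebra.adjoin_singleton_eq_range_aeval] at hv hw
  obtain ⟨p, rfl⟩ := hv
  obtain ⟨q, rfl⟩ := hw
  change Polynomial.aeval x⁻¹ p = x * Polynomial.aeval x q at h
  have hx0 := hx.ne_zero
  let := invertibleOfNonzero (inv_ne_zero hx0)
  have hrev : Polynomial.aeval x p.reverse = Polynomial.aeval x⁻¹ p * x ^ p.natDegree := by
    have := Polynomial.eval₂_reverse_mul_pow (algebraMap K F) x⁻¹ p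
    rw [invOf_eq_inv, inv_inv, ← Polynomial.aeval_def, ← Polynomial.aeval_def] at this
    rw [← this, inv_pow, inv_mul_cancel_right₀ (pow_ne_zero _ hx0)]
  have hpq : p.reverse = Polynomial.X ^ (p.natDegree + 1) * q := by
    refine transcendental_iff_injective.mp hx ?_
    rw [hrev, h, map_mul, map_pow, Polynomial.aeval_X]
    ring
  -- `p.reverse` has degree at most `p.natDegree`, which `X ^ (p.natDegree + 1) * q` exceeds
  suffices hq : q = 0 by simp [hq]
  by_contra hq0
  have := (algebraMap K F).domain_nontrivial
  have := Polynomial.reverse_natDegree_le p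
  rw [hpq, mul_comm, Polynomial.natDegree_mul_X_pow _ hq0] at this
  omega

theorem exists_zpow_mul_of_mem_closure {G : Type*} [CommGroupWithZero G] {u z : G} {T : Set G}
    (hu : u ≠ 0) (hz : z ∈ Submonoid.closure ({u, u⁻¹} ∪ T)) :
    ∃ d : ℤ, ∃ t ∈ Submonoid.closure T, z = u ^ d * t := by
  induction hz using Submonoid.closure_induction with
  | mem z hz =>
    rcases hz with (rfl | rfl) | hz
    · exact ⟨1, 1, one_mem _, by simp⟩
    · exact ⟨-1, 1, one_mem _, by simp⟩
    · exact ⟨0, z, Submonoid.subset_closure hz, by simp⟩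
  | one => exact ⟨0, 1, one_mem _, by simp⟩
  | mul z z' _ _ ih ih' =>
    obtain ⟨d, t, ht, rfl⟩ := ih
    obtain ⟨d', t', ht', rfl⟩ := ih'
    refine ⟨d + d', t * t', mul_mem ht ht', ?_⟩
    rw [zpow_add₀ hu, mul_mul_mul_comm]

theorem exists_add_inv_mul_of_mem_adjoin {R F : Type*} [CommRing R] [Field F] [Algebra R F]
    {u y : F} {T : Set F} (hu : u ≠ 0) (hy : y ∈ Algebra.adjoin R ({u, u⁻¹} ∪ T)) :
    ∃ a ∈ Algebra.adjoin R (insert u T), ∃ b ∈ Algebra.adjoin R (insert u⁻¹ T),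
      y = a + u⁻¹ * b := by
  have hT {w : F} : Submonoid.closure T ≤ (Algebra.adjoin R (insert w T)).toSubmonoid :=
    Submonoid.closure_le.mpr ((Set.subset_insert _ _).trans Algebra.subset_adjoin)
  have hpow {w : F} (k : ℕ) : w ^ k ∈ Algebra.adjoin R (insert w T) :=
    pow_mem (Algebra.subset_adjoin (Set.mem_insert _ _)) k
  rw [← Subalgebra.mem_toSubmodule, Algebra.adjoin_eq_span] at hy
  induction hy using Submodule.span_induction with
  | mem z hz =>
    obtain ⟨d, t, ht, rfl⟩ := exists_zpow_mul_of_mem_closure hu hz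
    rcases d with k | k
    · exact ⟨u ^ k * t, mul_mem (hpow k) (hT ht), 0, zero_mem _, by simp⟩
    · refine ⟨0, zero_mem _, u⁻¹ ^ k * t, mul_mem (hpow k) (hT ht), ?_⟩
      rw [zpow_negSucc, zero_add, ← mul_assoc, ← pow_succ', inv_pow]
  | zero => exact ⟨0, zero_mem _, 0, zero_mem _, by simp⟩
  | add y y' _ _ ih ih' =>
    obtain ⟨a, ha, b, hb, rfl⟩ := ih
    obtain ⟨a', ha', b', hb', rfl⟩ := ih'
    exact ⟨a + a', add_mem ha ha', b + b', add_mem hb hb', by ring⟩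
  | smul r y _ ih =>
    obtain ⟨a, ha, b, hb, rfl⟩ := ih
    refine ⟨r • a, Subalgebra.smul_mem _ ha r, r • b, Subalgebra.smul_mem _ hb r, ?_⟩
    rw [smul_add, mul_smul_comm]

theorem adjoin_pair_mul_inv_le {R F : Type*} [CommRing R] [Field F] [Algebra R F] {T : Set F}
    {h : F} (hh : h ∈ Algebra.adjoin R T) (v : F) :
    Algebra.adjoin R ({v, h * v⁻¹} ∪ T) ≤ Algebra.adjoin R ({v, v⁻¹} ∪ T) := by
  have hgen {z : F} (hz : z ∈ ({v, v⁻¹} : Set F)) : z ∈ Algebra.adjoin R ({v, v⁻¹} ∪ T) :=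
    Algebra.subset_adjoin (Or.inl hz)
  refine Algebra.adjoin_le (Set.union_subset (Set.pair_subset (hgen (by simp)) ?_)
    (Algebra.subset_adjoin.trans' Set.subset_union_right))
  exact mul_mem (Algebra.adjoin_mono Set.subset_union_right hh) (hgen (by simp))

section Exchange

variable {R A F : Type*} [CommRing R] [CommRing A] [Field F] [Algebra R A] [Algebra A F]
  [Algebra R F] [IsScalarTower R A F] {K : Subalgebra A F} {T : Set F}

theorem adjoin_insert_le_adjoin_singleton (hT : T ⊆ K) {z w : F}
    (hz : z ∈ Algebra.adjoin K {w}) :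
    Algebra.adjoin R (insert z T) ≤ (Algebra.adjoin K {w}).restrictScalars R := by
  refine Algebra.adjoin_le (Set.insert_subset hz fun t ht => ?_)
  exact Subalgebra.algebraMap_mem (Algebra.adjoin K {w}) (⟨t, hT ht⟩ : K)

theorem mul_mem_adjoin_singleton {c : F} (hc : c ∈ K) (w : F) : c * w ∈ Algebra.adjoin K {w} :=
  mul_mem (Subalgebra.algebraMap_mem _ (⟨c, hc⟩ : K)) (Algebra.subset_adjoin rfl)

theorem adjoin_inf_adjoin_eq_of_transcendental (hT : T ⊆ K) {x h x' : F}
    (hx : Transcendental K x) (hh : h ∈ Algebra.adjoin R T) (h0 : h ≠ 0) (hinv : h⁻¹ ∈ K)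
    (hx' : x' = h / x) :
    Algebra.adjoin R ({x, x⁻¹} ∪ T) ⊓ Algebra.adjoin R ({x', x'⁻¹} ∪ T) =
      Algebra.adjoin R ({x, x'} ∪ T) := by
  have hx0 := hx.ne_zero
  have hx'0 : x' ≠ 0 := hx' ▸ div_ne_zero h0 hx0
  have hK : h ∈ K := Algebra.adjoin_le (S := K.restrictScalars R) hT hh
  have hx'inv : x'⁻¹ = h⁻¹ * x := by rw [hx', inv_div, div_eq_inv_mul]
  have hBA : Algebra.adjoin R ({x, x'} ∪ T) ≤ Algebra.adjoin R ({x', x'⁻¹} ∪ T) := by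
    rw [Set.pair_comm, show x = h * x'⁻¹ by rw [hx'inv, mul_inv_cancel_left₀ h0]]
    exact adjoin_pair_mul_inv_le hh x'
  have hB {z : F} (hz : z ∈ ({x, x'} : Set F)) :
      Algebra.adjoin R (insert z T) ≤ Algebra.adjoin R ({x, x'} ∪ T) :=
    Algebra.adjoin_mono (Set.insert_subset (Or.inl hz) Set.subset_union_right)
  refine le_antisymm ?_ (le_inf ?_ hBA)
  · rintro y ⟨hyL, hyA⟩
    obtain ⟨a, ha, b, hb, rfl⟩ := exists_add_inv_mul_of_mem_adjoin hx0 hyL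
    replace ha : a ∈ Algebra.adjoin R ({x, x'} ∪ T) := hB (by simp) ha
    have hb' : x⁻¹ * b ∈ Algebra.adjoin R ({x', x'⁻¹} ∪ T) := by
      have := sub_mem hyA (hBA ha)
      rwa [add_sub_cancel_left] at this
    obtain ⟨c, hc, e, he, hce⟩ := exists_add_inv_mul_of_mem_adjoin hx'0 hb'
    have he0 : h⁻¹ * e = 0 := by
      refine eq_zero_of_mem_adjoin_inv_of_eq_mul hx (v := x⁻¹ * b - c) (sub_mem ?_ ?_)
        ?_ (by rw [hce, hx'inv]; ring)
      · exact mul_mem (Algebra.subset_adjoin rfl)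
          (adjoin_insert_le_adjoin_singleton (R := R) hT (Algebra.subset_adjoin rfl) hb)
      · rw [hx', div_eq_mul_inv] at hc
        exact adjoin_insert_le_adjoin_singleton (R := R) hT (mul_mem_adjoin_singleton hK _) hc
      · rw [hx'inv] at he
        exact mul_mem (Subalgebra.algebraMap_mem _ (⟨h⁻¹, hinv⟩ : K))
          (adjoin_insert_le_adjoin_singleton (R := R) hT (mul_mem_adjoin_singleton hinv _) he)
    rw [hce, hx'inv, mul_right_comm, he0, zero_mul, add_zero]
    exact add_mem ha (hB (by simp) hc)
  · rw [hx', div_eq_mul_inv]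
    exact adjoin_pair_mul_inv_le hh x

end Exchange

theorem iUnion_eq_union_biUnion_ne {α ι : Type*} (f : ι → Set α) (j : ι) :
    ⋃ i, f i = f j ∪ ⋃ i ∈ {i | i ≠ j}, f i :=
  iSup_split_single f j

theorem mem_supported_compl_singleton {σ R : Type*} [CommSemiring R] {j : σ}
    {p : MvPolynomial σ R} (h : ∀ m ∈ p.support, m j = 0) : p ∈ supported R {j}ᶜ := by
  classical
  rw [mem_supported]
  intro k hk hkj
  obtain ⟨m, hm, hk⟩ := (mem_vars_iff_mem_support k).mp hk
  exact Finsupp.mem_support_iff.mp hk (hkj ▸ h m hm)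

section ClusterVariables

variable {R : Type*} [CommRing R] [IsDomain R] {n : ℕ}

theorem algebraicIndependent_xv : AlgebraicIndependent R (xv R (n := n)) :=
  (MvPolynomial.algebraicIndependent_X (Fin n) R).map'
    (f := IsScalarTower.toAlgHom R (MvPolynomial (Fin n) R) (AmbientField R n))
    (IsFractionRing.injective _ _)

theorem transcendental_xv_algebraicClosure (j : Fin n) :
    Transcendental (Subalgebra.algebraicClosure (Algebra.adjoin R (xv R '' {j}ᶜ))
      (AmbientField R n)) (xv R j) :=
  have h : Transcendental (Algebra.adjoin R (xv R '' {j}ᶜ)) (xv R j) :=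
    algebraicIndependent_xv.transcendental_adjoin (by simp)
  h.subalgebraAlgebraicClosure

theorem toAmbient_ne_zero {p : MvPolynomial (Fin n) R} (hp : p ≠ 0) : toAmbient R p ≠ 0 :=
  (map_ne_zero_iff _ (IsFractionRing.injective _ _)).mpr hp

theorem toAmbient_mem_adjoin_xv {s : Set (Fin n)} {p : MvPolynomial (Fin n) R}
    (hp : p ∈ supported R s) : toAmbient R p ∈ Algebra.adjoin R (xv R '' s) := by
  rw [show xv R '' s = IsScalarTower.toAlgHom R (MvPolynomial (Fin n) R) (AmbientField R n) ''
      (X '' s) by rw [Set.image_image]; rfl, Algebra.adjoin_image]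
  exact Subalgebra.mem_map.mpr ⟨p, hp, rfl⟩

theorem inv_toAmbient_monomial_mem {S : Subalgebra R (AmbientField R n)} {m : Fin n →₀ ℕ}
    (h : ∀ k ∈ m.support, (xv R k)⁻¹ ∈ S) : (toAmbient R (monomial m 1))⁻¹ ∈ S := by
  rw [toAmbient, monomial_eq, C_1, one_mul, map_finsuppProd, Finsupp.prod,
    ← Finset.prod_inv_distrib]
  exact prod_mem fun k hk => by rw [map_pow, ← inv_pow]; exact pow_mem (h k hk) _

theorem isAlgebraic_xv_of_ne {j k : Fin n} (hk : k ≠ j) :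
    IsAlgebraic (Algebra.adjoin R (xv R '' {j}ᶜ)) (xv R k) :=
  isAlgebraic_algebraMap
    (⟨xv R k, Algebra.subset_adjoin ⟨k, hk, rfl⟩⟩ : Algebra.adjoin R (xv R '' {j}ᶜ))

variable (R) in
theorem biUnion_xv_pair_subset_algebraicClosure (j : Fin n) :
    ⋃ k ∈ {k | k ≠ j}, ({xv R k, (xv R k)⁻¹} : Set (AmbientField R n)) ⊆
      Subalgebra.algebraicClosure (Algebra.adjoin R (xv R '' {j}ᶜ)) (AmbientField R n) := by
  intro z hz
  obtain ⟨k, hk, hz⟩ := Set.mem_iUnion₂.mp hz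
  have hxk := isAlgebraic_xv_of_ne (R := R) hk
  rcases hz with rfl | rfl
  exacts [hxk, hxk.inv]

variable {j : Fin n}

theorem toAmbient_mem_adjoin_xv_compl {p : MvPolynomial (Fin n) R}
    (hp : ∀ m ∈ p.support, m j = 0) : toAmbient R p ∈ Algebra.adjoin R (xv R '' {j}ᶜ) :=
  toAmbient_mem_adjoin_xv (mem_supported_compl_singleton hp)

theorem div_monomial_mem_adjoin_biUnion_xv_pair {p : MvPolynomial (Fin n) R}
    (hp : ∀ m ∈ p.support, m j = 0) {m : Fin n →₀ ℕ} (hm : m j = 0) :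
    toAmbient R p / toAmbient R (monomial m 1) ∈
      Algebra.adjoin R (⋃ k ∈ {k | k ≠ j}, ({xv R k, (xv R k)⁻¹} : Set (AmbientField R n))) := by
  rw [div_eq_mul_inv]
  refine mul_mem (Algebra.adjoin_mono ?_ (toAmbient_mem_adjoin_xv_compl hp))
    (inv_toAmbient_monomial_mem fun k hk =>
      Algebra.subset_adjoin (Set.mem_iUnion₂.mpr ⟨k, ?_, Or.inr rfl⟩))
  · rintro _ ⟨k, hk, rfl⟩
    exact Set.mem_iUnion₂.mpr ⟨k, hk, Or.inl rfl⟩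
  · rintro rfl
    exact Finsupp.mem_support_iff.mp hk hm

theorem inv_div_monomial_mem_algebraicClosure {p : MvPolynomial (Fin n) R}
    (hp : ∀ m ∈ p.support, m j = 0) {m : Fin n →₀ ℕ} (hm : m j = 0) :
    (toAmbient R p / toAmbient R (monomial m 1))⁻¹ ∈
      Subalgebra.algebraicClosure (Algebra.adjoin R (xv R '' {j}ᶜ)) (AmbientField R n) := by
  have hmj : ∀ m' ∈ (monomial m (1 : R)).support, m' j = 0 := fun m' hm' =>
    Finset.mem_singleton.mp (support_monomial_subset hm') ▸ hm
  rw [inv_div, div_eq_mul_inv]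
  exact mul_mem
    (isAlgebraic_algebraMap (⟨_, toAmbient_mem_adjoin_xv_compl hmj⟩ : Algebra.adjoin R _))
    (isAlgebraic_algebraMap (⟨_, toAmbient_mem_adjoin_xv_compl hp⟩ : Algebra.adjoin R _)).inv

end ClusterVariables

theorem statement1_general {R : Type*} [CommRing R] [IsDomain R]
    {n : ℕ} [NeZero n]
    (F : Fin n → MvPolynomial (Fin n) R)
    -- `F j` does not involve `x_j`
    (hFx : ∀ j, ∀ m ∈ (F j).support, m j = 0)
    -- each `F j` is irreducible in `R[x_1,…,x_n]`
    (hFirr : ∀ j, Irreducible (F j))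
    -- `M j` is a monomial in the variables other than `x_j`
    (M : Fin n → (Fin n →₀ ℕ)) (hM : ∀ j, M j j = 0)
    (x' : Fin n → AmbientField R n)
    (hx' : ∀ j, x' j =
      (toAmbient R (F j) / toAmbient R (MvPolynomial.monomial (M j) (1 : R))) / xv R j) :
    (Algebra.adjoin R (⋃ i : Fin n, ({xv R i, (xv R i)⁻¹} : Set (AmbientField R n)))) ⊓
      (⨅ i : Fin n, Algebra.adjoin R (({x' i, (x' i)⁻¹} : Set (AmbientField R n)) ∪
        ⋃ j ∈ ({j : Fin n | j ≠ i}), ({xv R j, (xv R j)⁻¹} : Set (AmbientField R n)))) =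
    ⨅ j : Fin n, Algebra.adjoin R (({xv R j, x' j} : Set (AmbientField R n)) ∪
        ⋃ i ∈ ({i : Fin n | i ≠ j}), ({xv R i, (xv R i)⁻¹} : Set (AmbientField R n))) := by
  rw [inf_iInf]
  refine iInf_congr fun j => ?_
  rw [iUnion_eq_union_biUnion_ne _ j]
  exact adjoin_inf_adjoin_eq_of_transcendental (biUnion_xv_pair_subset_algebraicClosure R j)
    (transcendental_xv_algebraicClosure j) (div_monomial_mem_adjoin_biUnion_xv_pair (hFx j) (hM j))
    (div_ne_zero (toAmbient_ne_zero (hFirr j).ne_zero) (toAmbient_ne_zero (by simp)))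
    (inv_div_monomial_mem_algebraicClosure (hFx j) (hM j)) (hx' j)

/-- For each `j` let `F_j` be a polynomial not involving `x_j`, irreducible
and not divisible by any variable, `M_j` a monomial in the variables `x_i (i ≠ j)`,
`F̂_j = F_j / M_j` and `x'_j = F̂_j / x_j`.  Then the upper bound
`U(Σ) = R[𝐱^{±1}] ∩ ⋂_i R[𝐱_i^{±1}]` equals
`⋂_j R[x_1^{±1},…,x_{j-1}^{±1}, x_j, x'_j, x_{j+1}^{±1},…,x_n^{±1}]`. -/
theorem statement1 {R : Type*} [CommRing R] [IsDomain R] [UniqueFactorizationMonoid R]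
    {n : ℕ} [NeZero n]
    (F : Fin n → MvPolynomial (Fin n) R)
    -- `F j` does not involve `x_j`
    (hFx : ∀ j, ∀ m ∈ (F j).support, m j = 0)
    -- each `F j` is irreducible in `R[x_1,…,x_n]`
    (hFirr : ∀ j, Irreducible (F j))
    -- no `F j` is divisible by a variable
    (hFvar : ∀ j i, ¬ (MvPolynomial.X i ∣ F j))
    -- `M j` is a monomial in the variables other than `x_j`
    (M : Fin n → (Fin n →₀ ℕ)) (hM : ∀ j, M j j = 0)
    (x' : Fin n → AmbientField R n)
    (hx' : ∀ j, x' j =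
      (toAmbient R (F j) / toAmbient R (MvPolynomial.monomial (M j) (1 : R))) / xv R j) :
    (Algebra.adjoin R (⋃ i : Fin n, ({xv R i, (xv R i)⁻¹} : Set (AmbientField R n)))) ⊓
      (⨅ i : Fin n, Algebra.adjoin R (({x' i, (x' i)⁻¹} : Set (AmbientField R n)) ∪
        ⋃ j ∈ ({j : Fin n | j ≠ i}), ({xv R j, (xv R j)⁻¹} : Set (AmbientField R n)))) =
    ⨅ j : Fin n, Algebra.adjoin R (({xv R j, x' j} : Set (AmbientField R n)) ∪
        ⋃ i ∈ ({i : Fin n | i ≠ j}), ({xv R i, (xv R i)⁻¹} : Set (AmbientField R n))) :=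
  statement1_general F hFx hFirr M hM x' hx'
end

section
/- Fix j ∈ [1,n]. Suppose F_j ∈ R[x_1,…,x_n] is a polynomial not involving x_j, irreducible in R[x_1,…,x_n] and not divisible by any variable x_i, M_j is a monomial in the variables {x_i : i ≠ j}, F̂_j = F_j/M_j and x'_j = F̂_j/x_j ∈ 𝔽. Then an element y ∈ 𝔽 belongs to R[x_1^{±1},…,x_{j-1}^{±1}, x_j, x'_j, x_{j+1}^{±1},…,x_n^{±1}] if and only if y can be written as y = Σ_{m=−M}^{N} c_m x_j^m with M, N nonnegative integers, each c_m ∈ R[x_i^{±1} : i ≠ j], and for every m ∈ [1,M] the coefficient c_{−m} is divisible by F̂_j^m in the Laurent polynomial ring R[x_i^{±1} : i ≠ j]. -/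
open MvPolynomial

/-- The generating set for the Laurent subalgebra in the variables other than `x_j`. -/
noncomputable def LSet (R : Type*) [CommRing R] [IsDomain R] {n : ℕ} (j : Fin n) :
    Set (AmbientField R n) :=
  ⋃ i ∈ ({i : Fin n | i ≠ j}), ({xv R i, (xv R i)⁻¹} : Set (AmbientField R n))

lemma xv_mem_LSet {R : Type*} [CommRing R] [IsDomain R] {n : ℕ} {j i : Fin n} (h : i ≠ j) :
    xv R i ∈ LSet R j :=
  Set.mem_iUnion₂.mpr ⟨i, h, by simp⟩

lemma xv_inv_mem_LSet {R : Type*} [CommRing R] [IsDomain R] {n : ℕ} {j i : Fin n} (h : i ≠ j) :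
    (xv R i)⁻¹ ∈ LSet R j :=
  Set.mem_iUnion₂.mpr ⟨i, h, by simp⟩

lemma toAmbient_monomial {R : Type*} [CommRing R] [IsDomain R] {n : ℕ} (m : Fin n →₀ ℕ) :
    toAmbient R (monomial m (1 : R)) = ∏ i ∈ m.support, (xv R i) ^ (m i) := by
  rw [toAmbient, monomial_eq, C_1, one_mul, Finsupp.prod, map_prod]
  simp [xv]

/-- A polynomial not involving `x_j` maps into the Laurent subalgebra. -/
lemma poly_mem_laurent {R : Type*} [CommRing R] [IsDomain R] {n : ℕ} (j : Fin n)
    (F : MvPolynomial (Fin n) R) (hF : ∀ m ∈ F.support, m j = 0) :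
    toAmbient R F ∈ Algebra.adjoin R (LSet R j) := by
  rw [toAmbient, F.as_sum, map_sum]
  refine Subalgebra.sum_mem _ fun m hm => ?_
  rw [monomial_eq, map_mul, Finsupp.prod, map_prod, ← algebraMap_eq,
    ← IsScalarTower.algebraMap_apply R (MvPolynomial (Fin n) R) (AmbientField R n)]
  refine mul_mem (Subalgebra.algebraMap_mem _ _) (Subalgebra.prod_mem _ fun i hi => ?_)
  have hij : i ≠ j := by
    rintro rfl
    exact (Finsupp.mem_support_iff.mp hi) (hF m hm)
  simp only [map_pow]
  exact pow_mem (Algebra.subset_adjoin (xv_mem_LSet hij)) _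

lemma monomial_inv_mem_laurent {R : Type*} [CommRing R] [IsDomain R] {n : ℕ} (j : Fin n)
    (m : Fin n →₀ ℕ) (hm : m j = 0) :
    (toAmbient R (monomial m (1 : R)))⁻¹ ∈ Algebra.adjoin R (LSet R j) := by
  rw [toAmbient_monomial, ← Finset.prod_inv_distrib]
  refine Subalgebra.prod_mem _ fun i hi => ?_
  have hij : i ≠ j := by
    rintro rfl
    exact (Finsupp.mem_support_iff.mp hi) hm
  rw [← inv_pow]
  exact pow_mem (Algebra.subset_adjoin (xv_inv_mem_LSet hij)) _

/-- `y` has a representation `∑_{m=-M}^N Fhat^{max(0,-m)} d_m x_j^m` with Laurent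
coefficients `d_m`. -/
abbrev HasRep {R : Type*} [CommRing R] [IsDomain R] {n : ℕ} (j : Fin n)
    (Fhat : AmbientField R n) (y : AmbientField R n) (M N : ℕ) : Prop :=
  ∃ d : ℤ → AmbientField R n, (∀ m, d m ∈ Algebra.adjoin R (LSet R j)) ∧
    y = ∑ m ∈ Finset.Icc (-(M : ℤ)) (N : ℤ), Fhat ^ (-m).toNat * d m * xv R j ^ m

lemma hasRep_mono {R : Type*} [CommRing R] [IsDomain R] {n : ℕ} {j : Fin n}
    {Fhat y : AmbientField R n} {M N M' N' : ℕ} (h : HasRep j Fhat y M N)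
    (hM : M ≤ M') (hN : N ≤ N') : HasRep j Fhat y M' N' := by
  classical
  obtain ⟨d, hd, rfl⟩ := h
  refine ⟨fun m => if m ∈ Finset.Icc (-(M : ℤ)) (N : ℤ) then d m else 0, fun m => ?_, ?_⟩
  · dsimp only
    split
    · exact hd m
    · exact Subalgebra.zero_mem _
  · calc ∑ m ∈ Finset.Icc (-(M : ℤ)) (N : ℤ), Fhat ^ (-m).toNat * d m * xv R j ^ m
        = ∑ m ∈ Finset.Icc (-(M : ℤ)) (N : ℤ), Fhat ^ (-m).toNat *
            (if m ∈ Finset.Icc (-(M : ℤ)) (N : ℤ) then d m else 0) * xv R j ^ m :=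
          Finset.sum_congr rfl fun m hm => by rw [if_pos hm]
      _ = ∑ m ∈ Finset.Icc (-(M' : ℤ)) (N' : ℤ), Fhat ^ (-m).toNat *
            (if m ∈ Finset.Icc (-(M : ℤ)) (N : ℤ) then d m else 0) * xv R j ^ m :=
          Finset.sum_subset (Finset.Icc_subset_Icc (by omega) (by omega))
            (fun m _ hm => by rw [if_neg hm, mul_zero, zero_mul])

lemma hasRep_add {R : Type*} [CommRing R] [IsDomain R] {n : ℕ} {j : Fin n}
    {Fhat y z : AmbientField R n} {M₁ N₁ M₂ N₂ : ℕ} (h₁ : HasRep j Fhat y M₁ N₁)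
    (h₂ : HasRep j Fhat z M₂ N₂) : HasRep j Fhat (y + z) (max M₁ M₂) (max N₁ N₂) := by
  obtain ⟨d, hd, rfl⟩ := hasRep_mono h₁ (le_max_left M₁ M₂) (le_max_left N₁ N₂)
  obtain ⟨e, he, rfl⟩ := hasRep_mono h₂ (le_max_right M₁ M₂) (le_max_right N₁ N₂)
  refine ⟨fun m => d m + e m, fun m => add_mem (hd m) (he m), ?_⟩
  rw [← Finset.sum_add_distrib]
  exact Finset.sum_congr rfl fun m _ => by ring

lemma hasRep_mul {R : Type*} [CommRing R] [IsDomain R] {n : ℕ} {j : Fin n}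
    {Fhat y z : AmbientField R n} {M₁ N₁ M₂ N₂ : ℕ} (hx : xv R j ≠ 0)
    (hF : Fhat ∈ Algebra.adjoin R (LSet R j))
    (h₁ : HasRep j Fhat y M₁ N₁) (h₂ : HasRep j Fhat z M₂ N₂) :
    HasRep j Fhat (y * z) (M₁ + M₂) (N₁ + N₂) := by
  classical
  obtain ⟨d, hd, rfl⟩ := h₁
  obtain ⟨e, he, rfl⟩ := h₂
  set A := Finset.Icc (-(M₁ : ℤ)) (N₁ : ℤ) with hA
  set B := Finset.Icc (-(M₂ : ℤ)) (N₂ : ℤ) with hB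
  set C := Finset.Icc (-((M₁ + M₂ : ℕ) : ℤ)) ((N₁ + N₂ : ℕ) : ℤ) with hC
  refine ⟨fun l => ∑ p ∈ (A ×ˢ B).filter (fun p => p.1 + p.2 = l),
      Fhat ^ ((-p.1).toNat + (-p.2).toNat - (-l).toNat) * (d p.1 * e p.2), fun l => ?_, ?_⟩
  · exact Subalgebra.sum_mem _ fun p _ =>
      mul_mem (pow_mem hF _) (mul_mem (hd _) (he _))
  have hmaps : ∀ p ∈ A ×ˢ B, p.1 + p.2 ∈ C := by
    intro p hp
    rw [Finset.mem_product] at hp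
    obtain ⟨hp1, hp2⟩ := hp
    rw [hA, Finset.mem_Icc] at hp1
    rw [hB, Finset.mem_Icc] at hp2
    rw [hC, Finset.mem_Icc]
    omega
  symm
  calc ∑ l ∈ C, Fhat ^ (-l).toNat *
          (∑ p ∈ (A ×ˢ B).filter (fun p => p.1 + p.2 = l),
            Fhat ^ ((-p.1).toNat + (-p.2).toNat - (-l).toNat) * (d p.1 * e p.2)) * xv R j ^ l
      = ∑ l ∈ C, ∑ p ∈ (A ×ˢ B).filter (fun p => p.1 + p.2 = l),
          (Fhat ^ (-p.1).toNat * d p.1 * xv R j ^ p.1) *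
            (Fhat ^ (-p.2).toNat * e p.2 * xv R j ^ p.2) := by
        refine Finset.sum_congr rfl fun l hl => ?_
        rw [Finset.mul_sum, Finset.sum_mul]
        refine Finset.sum_congr rfl fun p hp => ?_
        obtain ⟨hpAB, hpl⟩ := Finset.mem_filter.mp hp
        subst hpl
        have hpow : Fhat ^ (-(p.1 + p.2)).toNat *
            Fhat ^ ((-p.1).toNat + (-p.2).toNat - (-(p.1 + p.2)).toNat) =
            Fhat ^ (-p.1).toNat * Fhat ^ (-p.2).toNat := by
          rw [← pow_add, ← pow_add]
          congr 1
          omega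
        rw [zpow_add₀ hx]
        linear_combination (d p.1 * e p.2 * (xv R j ^ p.1 * xv R j ^ p.2)) * hpow
    _ = ∑ p ∈ A ×ˢ B, (Fhat ^ (-p.1).toNat * d p.1 * xv R j ^ p.1) *
          (Fhat ^ (-p.2).toNat * e p.2 * xv R j ^ p.2) :=
        Finset.sum_fiberwise_of_maps_to hmaps _
    _ = (∑ m ∈ A, Fhat ^ (-m).toNat * d m * xv R j ^ m) *
          (∑ k ∈ B, Fhat ^ (-k).toNat * e k * xv R j ^ k) := by
        rw [Finset.sum_mul_sum, ← Finset.sum_product']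

/-- Fix `j`.  With `F_j` not involving `x_j`, irreducible, not divisible
by any variable, `M_j` a monomial in the other variables, `F̂_j = F_j/M_j` and
`x'_j = F̂_j/x_j`, an element `y ∈ 𝔽` lies in
`R[x_1^{±1},…,x_{j-1}^{±1}, x_j, x'_j, x_{j+1}^{±1},…,x_n^{±1}]` iff
`y = Σ_{m=-M}^{N} c_m x_j^m` with each `c_m` in the Laurent ring in the variables `x_i (i ≠ j)`
and `c_{-m}` divisible by `F̂_j^m` there for `1 ≤ m ≤ M`. -/
theorem statement2 {R : Type*} [CommRing R] [IsDomain R] [UniqueFactorizationMonoid R]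
    {n : ℕ} [NeZero n] (j : Fin n)
    (Fj : MvPolynomial (Fin n) R)
    -- `F_j` does not involve `x_j`
    (hFx : ∀ m ∈ Fj.support, m j = 0)
    -- `F_j` is irreducible in `R[x_1,…,x_n]`
    (hFirr : Irreducible Fj)
    -- `F_j` is not divisible by any variable
    (hFvar : ∀ i, ¬ (MvPolynomial.X i ∣ Fj))
    -- `M_j` is a monomial in the variables other than `x_j`
    (Mj : Fin n →₀ ℕ) (hMj : Mj j = 0)
    (Fhat xj' : AmbientField R n)
    (hFhat : Fhat = toAmbient R Fj / toAmbient R (MvPolynomial.monomial Mj (1 : R)))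
    (hxj' : xj' = Fhat / xv R j)
    (y : AmbientField R n) :
    y ∈ Algebra.adjoin R (({xv R j, xj'} : Set (AmbientField R n)) ∪
        ⋃ i ∈ ({i : Fin n | i ≠ j}), ({xv R i, (xv R i)⁻¹} : Set (AmbientField R n))) ↔
    ∃ (M N : ℕ) (c : ℤ → AmbientField R n),
      (∀ m : ℤ, c m ∈ Algebra.adjoin R
          (⋃ i ∈ ({i : Fin n | i ≠ j}), ({xv R i, (xv R i)⁻¹} : Set (AmbientField R n)))) ∧
      (∀ m : ℕ, 1 ≤ m → m ≤ M → ∃ d ∈ Algebra.adjoin R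
          (⋃ i ∈ ({i : Fin n | i ≠ j}), ({xv R i, (xv R i)⁻¹} : Set (AmbientField R n))),
          c (-(m : ℤ)) = Fhat ^ m * d) ∧
      y = ∑ m ∈ Finset.Icc (-(M : ℤ)) (N : ℤ), c m * (xv R j) ^ m := by
  classical
  have hxne : xv R j ≠ 0 := by
    simp [xv, IsFractionRing.to_map_eq_zero_iff, X_ne_zero]
  have hFhatL : Fhat ∈ Algebra.adjoin R (LSet R j) := by
    rw [hFhat, div_eq_mul_inv]
    exact mul_mem (poly_mem_laurent j Fj hFx) (monomial_inv_mem_laurent j Mj hMj)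
  -- the goal's union set, in terms of `LSet`
  have hset : (({xv R j, xj'} : Set (AmbientField R n)) ∪
      ⋃ i ∈ ({i : Fin n | i ≠ j}), ({xv R i, (xv R i)⁻¹} : Set (AmbientField R n))) =
      ({xv R j, xj'} : Set (AmbientField R n)) ∪ LSet R j := rfl
  constructor
  · intro hy
    have hQ : ∃ M N : ℕ, HasRep j Fhat y M N := by
      induction hy using Algebra.adjoin_induction with
      | mem x hx =>
        rcases hx with hx | hx
        · rcases hx with rfl | hx
          · -- x = xv R j
            refine ⟨0, 1, fun m => if m = 1 then 1 else 0, fun m => ?_, ?_⟩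
            · dsimp only
              split
              · exact Subalgebra.one_mem _
              · exact Subalgebra.zero_mem _
            · have hIcc : Finset.Icc (-((0 : ℕ) : ℤ)) ((1 : ℕ) : ℤ) = {0, 1} := rfl
              rw [hIcc]
              simp
          · -- x = xj'
            rw [Set.mem_singleton_iff] at hx
            subst hx
            refine ⟨1, 0, fun m => if m = -1 then 1 else 0, fun m => ?_, ?_⟩
            · dsimp only
              split
              · exact Subalgebra.one_mem _
              · exact Subalgebra.zero_mem _
            · have hIcc : Finset.Icc (-((1 : ℕ) : ℤ)) ((0 : ℕ) : ℤ) = {-1, 0} := rfl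
              rw [hIcc]
              simp [hxj', div_eq_mul_inv]
        · exact ⟨0, 0, fun _ => x, fun _ => Algebra.subset_adjoin hx, by simp⟩
      | algebraMap r =>
        exact ⟨0, 0, fun _ => algebraMap R _ r, fun _ => Subalgebra.algebraMap_mem _ r, by simp⟩
      | add x z hx hz ihx ihz =>
        obtain ⟨M₁, N₁, h₁⟩ := ihx
        obtain ⟨M₂, N₂, h₂⟩ := ihz
        exact ⟨max M₁ M₂, max N₁ N₂, hasRep_add h₁ h₂⟩
      | mul x z hx hz ihx ihz =>
        obtain ⟨M₁, N₁, h₁⟩ := ihx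
        obtain ⟨M₂, N₂, h₂⟩ := ihz
        exact ⟨M₁ + M₂, N₁ + N₂, hasRep_mul hxne hFhatL h₁ h₂⟩
    obtain ⟨M, N, d, hd, rfl⟩ := hQ
    refine ⟨M, N, fun m => Fhat ^ (-m).toNat * d m, fun m => mul_mem (pow_mem hFhatL _) (hd m),
      fun m h1 hM => ⟨d (-(m : ℤ)), hd _, by simp⟩, rfl⟩
  · rintro ⟨M, N, c, hc, hdiv, rfl⟩
    rw [hset]
    have hLsub : Algebra.adjoin R (LSet R j) ≤
        Algebra.adjoin R (({xv R j, xj'} : Set (AmbientField R n)) ∪ LSet R j) :=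
      Algebra.adjoin_mono Set.subset_union_right
    have hxmem : xv R j ∈ Algebra.adjoin R
        (({xv R j, xj'} : Set (AmbientField R n)) ∪ LSet R j) :=
      Algebra.subset_adjoin (Or.inl (Set.mem_insert _ _))
    have hxj'mem : xj' ∈ Algebra.adjoin R
        (({xv R j, xj'} : Set (AmbientField R n)) ∪ LSet R j) :=
      Algebra.subset_adjoin (Or.inl (Set.mem_insert_of_mem _ rfl))
    refine Subalgebra.sum_mem _ fun m hm => ?_
    rw [Finset.mem_Icc] at hm
    rcases le_or_gt 0 m with h0 | h0
    · have hz : (xv R j) ^ m = (xv R j) ^ m.toNat := by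
        rw [← zpow_natCast, Int.toNat_of_nonneg h0]
      rw [hz]
      exact mul_mem (hLsub (hc m)) (pow_mem hxmem _)
    · set k : ℕ := (-m).toNat with hk
      have hk1 : 1 ≤ k := by omega
      have hk2 : k ≤ M := by omega
      obtain ⟨d, hdL, hcd⟩ := hdiv k hk1 hk2
      have hmk : m = -(k : ℤ) := by omega
      rw [hmk, hcd]
      have heq : Fhat ^ k * d * xv R j ^ (-(k : ℤ)) = xj' ^ k * d := by
        rw [zpow_neg, zpow_natCast, ← inv_pow, hxj', div_eq_mul_inv, mul_pow]
        ring
      rw [heq]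
      exact mul_mem (pow_mem hxj'mem _) (hLsub hdL)
end

section
/- Suppose for each k ∈ [1,n], F_k ∈ R[x_1,…,x_n] is a polynomial not involving x_k, irreducible in R[x_1,…,x_n] and not divisible by any variable x_i, and suppose the following condition (which expresses F̂_k = F_k for all k) holds: for every k and every j ≠ k, the polynomial obtained from F_k by substituting x_j ↦ F_j·t, an element of R[{x_i : i ≠ j}][t], is not divisible by F_j. Then for all i ≠ k, F_i and F_k are not associates in R[x_1,…,x_n]; consequently, being non-associated irreducibles in a UFD, F_i and F_k are coprime (every common divisor of F_i and F_k is a unit). -/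
open MvPolynomial

lemma aux_aeval_C {R : Type*} [CommRing R] {n : ℕ} {i : Fin n}
    (φ : Fin n → Polynomial (MvPolynomial (Fin n) R))
    (hφ : ∀ j, j ≠ i → φ j = Polynomial.C (MvPolynomial.X j))
    (p : MvPolynomial (Fin n) R) (hp : ∀ m ∈ p.support, m i = 0) :
    MvPolynomial.aeval φ p = Polynomial.C p := by
  rw [p.as_sum, map_sum, map_sum]
  refine Finset.sum_congr rfl fun m hm => ?_
  rw [aeval_monomial, monomial_eq, map_mul]
  congr 1
  rw [Finsupp.prod, Finsupp.prod, map_prod]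
  refine Finset.prod_congr rfl fun j hj => ?_
  have hi : i ∉ m.support := Finsupp.notMem_support_iff.mpr (hp m hm)
  have hji : j ≠ i := by rintro rfl; exact hi hj
  rw [hφ j hji, map_pow]

/-- Suppose each `F_k ∈ R[x_1,…,x_n]` does not involve `x_k`, is irreducible
and is not divisible by any variable, and that for all `k` and `j ≠ k` the polynomial
obtained from `F_k` by substituting `x_j ↦ F_j·t` (an element of `R[{x_i : i ≠ j}][t]`) is not
divisible by `F_j` (this expresses `F̂_k = F_k` for all `k`).  Then for `i ≠ k`, `F_i` and `F_k`
are not associates, and every common divisor of `F_i` and `F_k` is a unit. -/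
theorem statement6 {R : Type*} [CommRing R] [IsDomain R] [UniqueFactorizationMonoid R]
    {n : ℕ}
    (F : Fin n → MvPolynomial (Fin n) R)
    -- `F k` does not involve `x_k`
    (hFx : ∀ k, ∀ m ∈ (F k).support, m k = 0)
    -- each `F k` is irreducible in `R[x_1,…,x_n]`
    (hFirr : ∀ k, Irreducible (F k))
    -- no `F k` is divisible by a variable
    (hFvar : ∀ k i, ¬ (MvPolynomial.X i ∣ F k))
    -- `F̂_k = F_k`: substituting `x_j ↦ F_j · t` in `F_k` yields a polynomial not divisible by `F_j`
    (hhat : ∀ k j, j ≠ k →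
      ¬ (Polynomial.C (F j) ∣
          MvPolynomial.aeval
            (fun i => if i = j then Polynomial.C (F j) * Polynomial.X
                      else Polynomial.C (MvPolynomial.X i)) (F k))) :
    ∀ i k, i ≠ k →
      (¬ Associated (F i) (F k)) ∧ (∀ d, d ∣ F i → d ∣ F k → IsUnit d) := by
  intro i k hik
  have hnass : ¬ Associated (F i) (F k) := by
    intro hass
    obtain ⟨c, hc⟩ := hass.dvd
    apply hhat k i hik
    set φ : Fin n → Polynomial (MvPolynomial (Fin n) R) :=
      fun j => if j = i then Polynomial.C (F i) * Polynomial.X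
               else Polynomial.C (MvPolynomial.X j) with hφdef
    have hφ : ∀ j, j ≠ i → φ j = Polynomial.C (MvPolynomial.X j) := by
      intro j hj; simp [hφdef, hj]
    have hFi : MvPolynomial.aeval φ (F i) = Polynomial.C (F i) :=
      aux_aeval_C φ hφ (F i) (hFx i)
    rw [hc, map_mul, hFi]
    exact Dvd.intro _ rfl
  refine ⟨hnass, fun d hdi hdk => ?_⟩
  by_contra hdu
  obtain ⟨e, he⟩ := hdi
  rcases (hFirr i).isUnit_or_isUnit he with h | h
  · exact hdu h
  · have hassd : Associated d (F i) := by
      rw [he]; exact (associated_mul_unit_right d e h).symm.symm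
    have : F i ∣ F k := hassd.symm.dvd.trans hdk
    exact hnass ((hFirr i).associated_of_dvd (hFirr k) this)
end

section
/- Suppose for each j ∈ [1,n], F_j ∈ R[x_1,…,x_n] is a polynomial not involving x_j, irreducible in R[x_1,…,x_n] and not divisible by any variable x_i, with x'_j = F_j/x_j ∈ 𝔽 (encoding F̂_j = F_j), and suppose that for each j ∈ [1,n−1] the lexicographically smallest monomial of F_j has the form x^{v_j} = x_{j+1}^{v_{j+1,j}}⋯x_n^{v_{n,j}} with nonnegative exponents, while for j = n the lexicographically smallest monomial of F_n is 1 (i.e., F_n has nonzero constant term which is its lex-smallest term). Then the standard monomials {x^{(a)} : a ∈ ℤ^n} are R-linearly independent in 𝔽 and their R-linear span equals the lower bound L(Σ) = R[x_1, x'_1,…,x_n, x'_n]; that is, the standard monomials form an R-module basis of L(Σ). -/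
open MvPolynomial

/-- The standard monomial `x^{(a)} = ∏ i x_i^{(a_i)}`, where `x_i^{(a_i)} = x_i^{a_i}` if
`a_i ≥ 0` and `x_i^{(a_i)} = (x'_i)^{-a_i}` if `a_i < 0`. -/
noncomputable def stdMon {R : Type*} [CommRing R] [IsDomain R] {n : ℕ}
    (x' : Fin n → AmbientField R n) (a : Fin n → ℤ) : AmbientField R n :=
  ∏ i : Fin n, if 0 ≤ a i then xv R i ^ (a i).toNat else (x' i) ^ (-(a i)).toNat

/-!
Since `x_i x'_i = F_i`, the standard monomials multiply as
`x^{(a)} x^{(b)} = (∏ i, F_i ^ t_i) x^{(a+b)}`, where `t_i` counts the cancelling pairs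
`x_i x'_i`.
So their span is a subalgebra as soon as it is stable under multiplication by polynomials, which
holds by induction on the total degree in the `x'_i`: multiplying by `x_i` either raises an
exponent or trades one `x'_i` for the polynomial `F_i`.

For independence, multiplying by a large monomial `x^M` turns each `x^{(a)}` into a polynomial
whose lex-smallest exponent is `M + a + ∑ j, max (-a_j) 0 • v_j`. As `v_j` only involves the
variables after `x_j`, these exponents are pairwise distinct, and polynomials with pairwise
distinct lex-smallest monomials are linearly independent.
-/

namespace MvPolynomial

variable {σ : Type*} [LinearOrder σ]

section CommSemiring

variable {R : Type*} [CommSemiring R]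

def IsLexLowest (p : MvPolynomial σ R) (b : σ →₀ ℕ) : Prop :=
  b ∈ p.support ∧ ∀ m ∈ p.support, toLex b ≤ toLex m

namespace IsLexLowest

variable {p q : MvPolynomial σ R} {b c : σ →₀ ℕ}

theorem coeff_eq_zero_of_lt (h : IsLexLowest p b) (hc : toLex c < toLex b) : p.coeff c = 0 :=
  notMem_support_iff.mp fun hmem => (h.2 c hmem).not_gt hc

theorem coeff_mul (hp : IsLexLowest p b) (hq : IsLexLowest q c) :
    (p * q).coeff (b + c) = p.coeff b * q.coeff c := by
  classical
  rw [MvPolynomial.coeff_mul]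
  refine Finset.sum_eq_single_of_mem (b, c) (Finset.HasAntidiagonal.mem_antidiagonal.mpr rfl) ?_
  rintro ⟨u, w⟩ huw hne
  rw [Finset.HasAntidiagonal.mem_antidiagonal] at huw
  by_contra h0
  have hu : toLex b ≤ toLex u := hp.2 u (mem_support_iff.mpr (left_ne_zero_of_mul h0))
  have hw : toLex c ≤ toLex w := hq.2 w (mem_support_iff.mpr (right_ne_zero_of_mul h0))
  have hsum : toLex u + toLex w = toLex b + toLex c := by
    rw [← toLex_add, ← toLex_add, huw]
  have hub : toLex u = toLex b :=
    le_antisymm ((add_le_add_iff_right (toLex w)).mp (hsum.trans_le (by gcongr))) hu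
  rw [hub] at hsum
  exact hne (Prod.ext (toLex.injective hub) (toLex.injective (add_left_cancel hsum)))

theorem mul [NoZeroDivisors R] (hp : IsLexLowest p b) (hq : IsLexLowest q c) :
    IsLexLowest (p * q) (b + c) := by
  refine ⟨mem_support_iff.mpr ?_, fun m hm => ?_⟩
  · rw [hp.coeff_mul hq]
    exact mul_ne_zero (mem_support_iff.mp hp.1) (mem_support_iff.mp hq.1)
  · obtain ⟨u, hu, w, hw, rfl⟩ := Finset.mem_add.mp (support_mul p q hm)
    exact add_le_add (hp.2 u hu) (hq.2 w hw)

end IsLexLowest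

theorem isLexLowest_one [Nontrivial R] : IsLexLowest (1 : MvPolynomial σ R) 0 := by
  classical
  refine ⟨by simp, fun m hm => ?_⟩
  rw [support_one, Finset.mem_singleton] at hm
  rw [hm]

theorem isLexLowest_X [Nontrivial R] (i : σ) :
    IsLexLowest (X i : MvPolynomial σ R) (Finsupp.single i 1) := by
  classical
  refine ⟨by simp [X], fun m hm => ?_⟩
  rw [support_X, Finset.mem_singleton] at hm
  rw [hm]

variable [NoZeroDivisors R] [Nontrivial R]

theorem IsLexLowest.pow {p : MvPolynomial σ R} {b : σ →₀ ℕ} (h : IsLexLowest p b)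
    (k : ℕ) :
    IsLexLowest (p ^ k) (k • b) := by
  induction k with
  | zero => simpa using isLexLowest_one
  | succ k ih => simpa only [pow_succ, succ_nsmul] using ih.mul h

theorem isLexLowest_prod {ι : Type*} (s : Finset ι) {p : ι → MvPolynomial σ R}
    {b : ι → σ →₀ ℕ} (h : ∀ i ∈ s, IsLexLowest (p i) (b i)) :
    IsLexLowest (∏ i ∈ s, p i) (∑ i ∈ s, b i) := by
  classical
  induction s using Finset.cons_induction with
  | empty => simpa using isLexLowest_one
  | cons a s ha ih =>
    rw [Finset.prod_cons, Finset.sum_cons]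
    exact (h a (Finset.mem_cons_self a s)).mul (ih fun i hi => h i (Finset.mem_cons_of_mem hi))

end CommSemiring

/-- In a vanishing combination, the smallest of these monomials among the terms with nonzero
coefficient occurs in exactly one term. -/
theorem linearIndepOn_of_isLexLowest {R ι : Type*} [CommRing R] [NoZeroDivisors R]
    {p : ι → MvPolynomial σ R} {b : ι → σ →₀ ℕ} {s : Set ι}
    (h : ∀ i ∈ s, IsLexLowest (p i) (b i)) (hb : s.InjOn b) :
    LinearIndepOn R p s := by
  classical
  rw [linearIndepOn_iff']
  intro t g hts hsum i hi
  by_contra hgi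
  obtain ⟨i₀, hi₀, hmin⟩ := (t.filter (g · ≠ 0)).exists_min_image (toLex ∘ b)
    ⟨i, Finset.mem_filter.mpr ⟨hi, hgi⟩⟩
  obtain ⟨hi₀t, hgi₀⟩ := Finset.mem_filter.mp hi₀
  have hcoeff : (∑ j ∈ t, g j • p j).coeff (b i₀) = g i₀ * (p i₀).coeff (b i₀) := by
    rw [coeff_sum, Finset.sum_eq_single_of_mem i₀ hi₀t, coeff_smul, smul_eq_mul]
    intro j hj hne
    rw [coeff_smul, smul_eq_mul]
    by_cases hgj : g j = 0
    · rw [hgj, zero_mul]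
    have hlt : toLex (b i₀) < toLex (b j) :=
      (hmin j (Finset.mem_filter.mpr ⟨hj, hgj⟩)).lt_of_ne fun heq =>
        hne (hb (hts hj) (hts hi₀t) (toLex.injective heq.symm))
    rw [(h j (hts hj)).coeff_eq_zero_of_lt hlt, mul_zero]
  rw [hsum, coeff_zero] at hcoeff
  exact mul_ne_zero hgi₀ (mem_support_iff.mp (h i₀ (hts hi₀t)).1) hcoeff.symm

end MvPolynomial

/-- For `y = x'` this is `x^{(c)}`: at most one of the two exponents is nonzero. -/
def stdPow {M : Type*} [Monoid M] (x y : M) (c : ℤ) : M := x ^ c.toNat * y ^ (-c).toNat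

/-- The number of pairs `x y` that cancel in `x^{(c)} x^{(d)}`. -/
def cancelCount (c d : ℤ) : ℕ := (-c).toNat + (-d).toNat - (-(c + d)).toNat

section CommMonoid

variable {M : Type*} [CommMonoid M] (x y : M)

theorem stdPow_mul_stdPow (c d : ℤ) :
    stdPow x y c * stdPow x y d = (x * y) ^ cancelCount c d * stdPow x y (c + d) := by
  have hx : c.toNat + d.toNat = cancelCount c d + (c + d).toNat := by unfold cancelCount; omega
  have hy : (-c).toNat + (-d).toNat = cancelCount c d + (-(c + d)).toNat := by
    unfold cancelCount; omega
  calc stdPow x y c * stdPow x y d = x ^ (c.toNat + d.toNat) * y ^ ((-c).toNat + (-d).toNat) := by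
        rw [stdPow, stdPow, mul_mul_mul_comm, pow_add, pow_add]
    _ = _ := by rw [hx, hy, pow_add, pow_add, mul_mul_mul_comm, ← mul_pow, stdPow]

theorem pow_mul_stdPow {m : ℕ} {c : ℤ} (hc : 0 ≤ m + c) :
    x ^ m * stdPow x y c = x ^ (m + c).toNat * (x * y) ^ (-c).toNat := by
  have h : m + c.toNat = (m + c).toNat + (-c).toNat := by omega
  rw [stdPow, ← mul_assoc, ← pow_add, h, pow_add, mul_pow, mul_assoc]

end CommMonoid

theorem toNat_neg_add_add_cancelCount (c d : ℤ) :
    (-(c + d)).toNat + cancelCount c d = (-c).toNat + (-d).toNat := by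
  unfold cancelCount; omega

section StandardMonomials

variable {R : Type*} [CommRing R] [IsDomain R] {n : ℕ}

theorem toAmbient_injective : Function.Injective (toAmbient R (n := n)) :=
  IsFractionRing.injective _ _

theorem xv_ne_zero (i : Fin n) : xv R i ≠ 0 :=
  (map_ne_zero_iff _ toAmbient_injective).mpr (X_ne_zero i)

theorem stdMon_eq_prod_stdPow (x' : Fin n → AmbientField R n) (a : Fin n → ℤ) :
    stdMon x' a = ∏ i, stdPow (xv R i) (x' i) (a i) := by
  refine Finset.prod_congr rfl fun i _ => ?_
  split_ifs with h
  · rw [stdPow, Int.toNat_eq_zero.mpr (by omega : -a i ≤ 0), pow_zero, mul_one]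
  · rw [stdPow, Int.toNat_eq_zero.mpr (by omega : a i ≤ 0), pow_zero, one_mul]

theorem stdMon_zero (x' : Fin n → AmbientField R n) : stdMon x' 0 = 1 := by
  simp [stdMon]

theorem stdMon_single_one (x' : Fin n → AmbientField R n) (i : Fin n) :
    stdMon x' (Pi.single i 1) = xv R i := by
  rw [stdMon, Fintype.prod_eq_single i fun j hj => by simp [hj]]
  simp

theorem stdMon_single_neg_one (x' : Fin n → AmbientField R n) (i : Fin n) :
    stdMon x' (Pi.single i (-1)) = x' i := by
  rw [stdMon, Fintype.prod_eq_single i fun j hj => by simp [hj]]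
  simp

variable {F : Fin n → MvPolynomial (Fin n) R} {x' : Fin n → AmbientField R n}

theorem stdMon_mul_stdMon (hx : ∀ i, xv R i * x' i = toAmbient R (F i)) (a b : Fin n → ℤ) :
    stdMon x' a * stdMon x' b =
      toAmbient R (∏ i, F i ^ cancelCount (a i) (b i)) * stdMon x' (a + b) := by
  simp only [stdMon_eq_prod_stdPow, ← Finset.prod_mul_distrib, stdPow_mul_stdPow, hx, toAmbient,
    map_prod, map_pow, Pi.add_apply]

/-- The total degree in the `x'_i` of `x^{(a)}`. -/
def negWeight (a : Fin n → ℤ) : ℕ := ∑ i, (-a i).toNat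

theorem negWeight_add_add_sum_cancelCount (a b : Fin n → ℤ) :
    negWeight (a + b) + ∑ i, cancelCount (a i) (b i) = negWeight a + negWeight b := by
  simp only [negWeight, ← Finset.sum_add_distrib, Pi.add_apply, toNat_neg_add_add_cancelCount]

theorem negWeight_single_one (i : Fin n) : negWeight (Pi.single i (1 : ℤ)) = 0 :=
  Finset.sum_eq_zero fun j _ => by by_cases h : j = i <;> simp [h]

/-- Multiplying by `x_i` either raises the exponent of `x_i`, or cancels one factor `x'_i`
into the polynomial `F_i`; the latter lowers `negWeight`, which drives the induction. -/
theorem toAmbient_mul_stdMon_mem_span (hx : ∀ i, xv R i * x' i = toAmbient R (F i))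
    (P : MvPolynomial (Fin n) R) (a : Fin n → ℤ) :
    toAmbient R P * stdMon x' a ∈ Submodule.span R (Set.range (stdMon x')) := by
  induction hk : negWeight a using Nat.strong_induction_on generalizing P a with
  | _ k ih =>
  induction P using MvPolynomial.induction_on generalizing a with
  | C r =>
    rw [toAmbient, ← algebraMap_eq, ← IsScalarTower.algebraMap_apply, ← Algebra.smul_def]
    exact Submodule.smul_mem _ _ (Submodule.subset_span ⟨a, rfl⟩)
  | add p q hp hq => rw [toAmbient, map_add, add_mul]; exact add_mem (hp a hk) (hq a hk)
  | mul_X p i hp =>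
    set Q := ∏ j, F j ^ cancelCount ((Pi.single i 1 : Fin n → ℤ) j) (a j)
    have hmul : toAmbient R (p * X i) * stdMon x' a =
        toAmbient R (p * Q) * stdMon x' (Pi.single i 1 + a) := by
      have h := stdMon_mul_stdMon hx (Pi.single i 1) a
      rw [stdMon_single_one] at h
      simp only [toAmbient, map_mul] at h ⊢
      rw [mul_assoc, mul_assoc, ← h, xv]
    have hweight := negWeight_add_add_sum_cancelCount (Pi.single i 1) a
    rw [negWeight_single_one, zero_add, hk] at hweight
    rw [hmul]
    by_cases h0 : ∑ j, cancelCount ((Pi.single i 1 : Fin n → ℤ) j) (a j) = 0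
    · have hQ : Q = 1 := Finset.prod_eq_one fun j hj => by
        rw [(Finset.sum_eq_zero_iff.mp h0) j hj, pow_zero]
      rw [hQ, mul_one]
      exact hp _ (by omega)
    · exact ih _ (by omega) _ _ rfl

theorem span_stdMon_eq_adjoin (hx : ∀ i, xv R i * x' i = toAmbient R (F i)) :
    Submodule.span R (Set.range (stdMon x')) =
      Subalgebra.toSubmodule (Algebra.adjoin R
        (⋃ i : Fin n, ({xv R i, x' i} : Set (AmbientField R n)))) := by
  set S := Submodule.span R (Set.range (stdMon x'))
  have hmul : S * S ≤ S := by
    rw [Submodule.span_mul_span]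
    refine Submodule.span_le.mpr ?_
    rintro _ ⟨_, ⟨a, rfl⟩, _, ⟨b, rfl⟩, rfl⟩
    change stdMon x' a * stdMon x' b ∈ S
    rw [stdMon_mul_stdMon hx]
    exact toAmbient_mul_stdMon_mem_span hx _ _
  have hone : (1 : AmbientField R n) ∈ S := stdMon_zero x' ▸ Submodule.subset_span ⟨0, rfl⟩
  let T := S.toSubalgebra hone fun _ _ hx hy => hmul (Submodule.mul_mem_mul hx hy)
  refine le_antisymm (Submodule.span_le.mpr ?_) ?_
  · rintro _ ⟨a, rfl⟩
    rw [SetLike.mem_coe, Subalgebra.mem_toSubmodule]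
    refine prod_mem fun i _ => ?_
    split_ifs
    · exact pow_mem (Algebra.subset_adjoin (Set.mem_iUnion_of_mem i (by simp))) _
    · exact pow_mem (Algebra.subset_adjoin (Set.mem_iUnion_of_mem i (by simp))) _
  · have hgen :
        Algebra.adjoin R (⋃ i : Fin n, ({xv R i, x' i} : Set (AmbientField R n))) ≤ T := by
      refine Algebra.adjoin_le (Set.iUnion_subset fun i => Set.insert_subset_iff.mpr ⟨?_, ?_⟩)
      · exact stdMon_single_one x' i ▸ Submodule.subset_span ⟨_, rfl⟩
      · exact Set.singleton_subset_iff.mpr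
          (stdMon_single_neg_one x' i ▸ Submodule.subset_span ⟨_, rfl⟩)
    exact Subalgebra.toSubmodule.monotone hgen

end StandardMonomials

section Independence

variable {R : Type*} [CommRing R] [IsDomain R] {n : ℕ}
  {F : Fin n → MvPolynomial (Fin n) R} {x' : Fin n → AmbientField R n}

/-- The exponent of the lex-smallest monomial of `x^M x^{(a)}` after clearing denominators.
Since `v j` only involves the variables after `x_j`, its `i`-th entry only sees `a j` for
`j ≤ i`, so `a` can be recovered entry by entry. -/
theorem injOn_lexLowest_exponent (v : Fin n → Fin n →₀ ℕ) (hv : ∀ j, ∀ i ≤ j, v j i = 0)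
    (M : Fin n → ℕ) :
    Set.InjOn (fun a : Fin n → ℤ => ∑ i, ((M i + a i).toNat • Finsupp.single i 1 +
      (-a i).toNat • v i)) {a | ∀ i, 0 ≤ (M i : ℤ) + a i} := by
  intro a ha a' ha' h
  funext i
  induction i using WellFoundedLT.induction with
  | ind i ih =>
  have hi := congrArg (· i) h
  simp only [Finsupp.finsetSum_apply, Finsupp.add_apply, Finsupp.smul_apply, smul_eq_mul,
    Finsupp.single_apply, Finset.sum_add_distrib, mul_ite, mul_one, mul_zero,
    Finset.sum_ite_eq', Finset.mem_univ, if_true] at hi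
  have hsum : ∑ j, (-a j).toNat * v j i = ∑ j, (-a' j).toNat * v j i :=
    Finset.sum_congr rfl fun j _ => by
      rcases le_or_gt i j with hij | hij
      · rw [hv j i hij, mul_zero, mul_zero]
      · rw [ih j hij]
  have := ha i
  have := ha' i
  omega

/-- Clearing denominators by `x^M` turns `x^{(a)}` into the polynomial
`∏ i, x_i^(M_i + a_i) F_i^(max (-a_i) 0)`, whose lex-smallest monomials are pairwise distinct. -/
theorem linearIndepOn_stdMon_of_le (hx : ∀ i, xv R i * x' i = toAmbient R (F i))
    {v : Fin n → Fin n →₀ ℕ} (hFv : ∀ j, (F j).IsLexLowest (v j))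
    (hv : ∀ j, ∀ i ≤ j, v j i = 0)
    (M : Fin n → ℕ) : LinearIndepOn R (stdMon x') {a | ∀ i, 0 ≤ (M i : ℤ) + a i} := by
  set P := fun a : Fin n → ℤ => ∏ i, X i ^ (M i + a i).toNat * F i ^ (-a i).toNat
  have hP : LinearIndepOn R P {a | ∀ i, 0 ≤ (M i : ℤ) + a i} :=
    linearIndepOn_of_isLexLowest
      (fun _ _ => isLexLowest_prod _ fun i _ => ((isLexLowest_X i).pow _).mul ((hFv i).pow _))
      (injOn_lexLowest_exponent v hv M)
  have hφP := hP.map_injOn (IsScalarTower.toAlgHom R (MvPolynomial (Fin n) R)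
    (AmbientField R n)).toLinearMap toAmbient_injective.injOn
  set c := ∏ i, xv R i ^ M i
  refine (hφP.congr fun a ha => ?_).of_comp (LinearMap.mulLeft R c)
  simp only [P, Function.comp_apply, LinearMap.mulLeft_apply, AlgHom.toLinearMap_apply,
    IsScalarTower.coe_toAlgHom', map_prod, map_mul, map_pow, c, stdMon_eq_prod_stdPow,
    ← Finset.prod_mul_distrib, pow_mul_stdPow _ _ (ha _), hx]
  rfl

theorem linearIndependent_stdMon (hx : ∀ i, xv R i * x' i = toAmbient R (F i))
    {v : Fin n → Fin n →₀ ℕ} (hFv : ∀ j, (F j).IsLexLowest (v j))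
    (hv : ∀ j, ∀ i ≤ j, v j i = 0) :
    LinearIndependent R (stdMon x') := by
  rw [← linearIndepOn_univ_iff, linearIndepOn_iff_linearIndepOn_finset]
  intro t _
  refine (linearIndepOn_stdMon_of_le hx hFv hv fun i => t.sup fun a => (-a i).toNat).mono
    fun a ha i => ?_
  have := Finset.le_sup (f := fun a : Fin n → ℤ => (-a i).toNat) ha
  omega

end Independence

theorem statement7_general {R : Type*} [CommRing R] [IsDomain R]
    {n : ℕ}
    (F : Fin n → MvPolynomial (Fin n) R)
    -- `x'_j = F_j / x_j` (encoding `F̂_j = F_j`)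
    (x' : Fin n → AmbientField R n)
    (hx' : ∀ j, x' j = toAmbient R (F j) / xv R j)
    -- `v j` is the lexicographically smallest monomial of `F j`
    (v : Fin n → (Fin n →₀ ℕ))
    (hvmem : ∀ j, v j ∈ (F j).support)
    (hvmin : ∀ j, ∀ m ∈ (F j).support, toLex (v j) ≤ toLex m)
    -- and it only involves the variables `x_i` with `i > j`
    (hvform : ∀ j, ∀ i ≤ j, v j i = 0) :
    LinearIndependent R (stdMon x') ∧
      Submodule.span R (Set.range (stdMon x')) =
        Subalgebra.toSubmodule (Algebra.adjoin R
          (⋃ i : Fin n, ({xv R i, x' i} : Set (AmbientField R n)))) := by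
  have hx : ∀ i, xv R i * x' i = toAmbient R (F i) := fun i => by
    rw [hx', mul_div_cancel₀ _ (xv_ne_zero i)]
  exact ⟨linearIndependent_stdMon hx (fun j => ⟨hvmem j, hvmin j⟩) hvform,
    span_stdMon_eq_adjoin hx⟩

/-- Under `F̂_j = F_j` and the hypothesis that the lex-smallest monomial of
each `F_j` only involves the variables `x_i` with `i > j` (so it is `1` for `j = n`), the
standard monomials `x^{(a)}`, `a ∈ ℤ^n`, are `R`-linearly independent and span the lower
bound `L(Σ) = R[x_1, x'_1, …, x_n, x'_n]`; i.e. they form an `R`-module basis of `L(Σ)`. -/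
theorem statement7 {R : Type*} [CommRing R] [IsDomain R] [UniqueFactorizationMonoid R]
    {n : ℕ} [NeZero n]
    (F : Fin n → MvPolynomial (Fin n) R)
    -- `F j` does not involve `x_j`
    (hFx : ∀ j, ∀ m ∈ (F j).support, m j = 0)
    -- each `F j` is irreducible in `R[x_1,…,x_n]`
    (hFirr : ∀ j, Irreducible (F j))
    -- no `F j` is divisible by a variable
    (hFvar : ∀ j i, ¬ (MvPolynomial.X i ∣ F j))
    -- `x'_j = F_j / x_j` (encoding `F̂_j = F_j`)
    (x' : Fin n → AmbientField R n)
    (hx' : ∀ j, x' j = toAmbient R (F j) / xv R j)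
    -- `v j` is the lexicographically smallest monomial of `F j`
    (v : Fin n → (Fin n →₀ ℕ))
    (hvmem : ∀ j, v j ∈ (F j).support)
    (hvmin : ∀ j, ∀ m ∈ (F j).support, toLex (v j) ≤ toLex m)
    -- and it only involves the variables `x_i` with `i > j`
    (hvform : ∀ j, ∀ i ≤ j, v j i = 0) :
    LinearIndependent R (stdMon x') ∧
      Submodule.span R (Set.range (stdMon x')) =
        Subalgebra.toSubmodule (Algebra.adjoin R
          (⋃ i : Fin n, ({xv R i, x' i} : Set (AmbientField R n)))) :=
  statement7_general F x' hx' v hvmem hvmin hvform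
end

section
/- Suppose for each j ∈ [1,n], F_j ∈ R[x_1,…,x_n] is a polynomial not involving x_j, irreducible in R[x_1,…,x_n] and not divisible by any variable x_i, with x'_j = F_j/x_j ∈ 𝔽 (encoding F̂_j = F_j), and suppose that for each j ∈ [1,n−1] the lexicographically smallest monomial of F_j has the form x^{v_j} = x_{j+1}^{v_{j+1,j}}⋯x_n^{v_{n,j}} with nonnegative exponents, while for j = n the lexicographically smallest monomial of F_n is 1. Then each standard monomial x^{(a)} is a nonzero Laurent polynomial in R[x_1^{±1},…,x_n^{±1}], and whenever a ≺ a' in ℤ^n (lexicographically), the lexicographically smallest monomial of x^{(a)} strictly precedes the lexicographically smallest monomial of x^{(a')}. -/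
/-!
Over a domain the lex-smallest monomial of a product is the product of the lex-smallest
monomials, because the lexicographic order on `ℤ^n` is compatible with addition. Since `x'_i`
has lex-smallest monomial `x^{v_i} / x_i`, the standard monomial `x^{(a)}` has lex-smallest
exponent `a + ∑_{a_i < 0} (-a_i) v_i`. As `v_i` only involves variables `x_j` with `j > i`, the
`j`-th coordinate of the correction term depends only on the `a_i` with `i < j`, so this exponent
is strictly lex-monotone in `a`.
-/

open MvPolynomial

/-- The Laurent polynomial ring `R[x_1^{±1},…,x_n^{±1}]`, realized as the monoid algebra of
`ℤ^n` over `R`; its monomials are indexed by exponent vectors in `Fin n →₀ ℤ`. -/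
noncomputable abbrev MvLaurent (R : Type*) [CommRing R] (n : ℕ) :=
  AddMonoidAlgebra R (Fin n →₀ ℤ)

/-- The canonical embedding `R[x_1,…,x_n] → R[x_1^{±1},…,x_n^{±1}]`. -/
noncomputable def polyToLaurent (R : Type*) [CommRing R] (n : ℕ) :
    MvPolynomial (Fin n) R →+* MvLaurent R n :=
  AddMonoidAlgebra.mapDomainRingHom R (Finsupp.mapRange.addMonoidHom (Nat.castAddMonoidHom ℤ))

/-- The variable `x_i` as a Laurent polynomial. -/
noncomputable def xL {R : Type*} [CommRing R] {n : ℕ} (i : Fin n) : MvLaurent R n :=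
  AddMonoidAlgebra.single (Finsupp.single i (1 : ℤ)) (1 : R)

/-- The standard monomial `x^{(a)} = ∏ i x_i^{(a_i)}`, where `x_i^{(a_i)} = x_i^{a_i}` if
`a_i ≥ 0` and `x_i^{(a_i)} = (x'_i)^{-a_i}` if `a_i < 0`, as a Laurent polynomial. -/
noncomputable def stdMonL {R : Type*} [CommRing R] {n : ℕ}
    (x' : Fin n → MvLaurent R n) (a : Fin n → ℤ) : MvLaurent R n :=
  ∏ i : Fin n, if 0 ≤ a i then (xL i : MvLaurent R n) ^ (a i).toNat
    else (x' i) ^ (-(a i)).toNat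

open AddMonoidAlgebra

namespace AddMonoidAlgebra

variable {R A A' B B' : Type*}

section Semiring

variable [Semiring R]

def IsMinExponent [LE B] (D : A → B) (f : R[A]) (a : A) : Prop :=
  a ∈ f.coeff.support ∧ ∀ b ∈ f.coeff.support, D a ≤ D b

variable {D : A → B} {f g : R[A]} {a b : A}

theorem IsMinExponent.ne_zero [LE B] (h : IsMinExponent D f a) : f ≠ 0 := by
  rintro rfl
  simpa using h.1

theorem IsMinExponent.unique [PartialOrder B] (hD : D.Injective) (ha : IsMinExponent D f a)
    (hb : IsMinExponent D f b) : a = b :=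
  hD <| (ha.2 b hb.1).antisymm (hb.2 a ha.1)

theorem isMinExponent_single [Preorder B] {r : R} (hr : r ≠ 0) :
    IsMinExponent D (single a r) a := by
  refine ⟨by simpa [coeff_single] using hr, fun b hb => ?_⟩
  rw [coeff_single, Finsupp.support_single a hr, Finset.mem_singleton] at hb
  rw [hb]

theorem isMinExponent_one [Preorder B] [Nontrivial R] [Zero A] :
    IsMinExponent D (1 : R[A]) 0 := by
  rw [one_def]
  exact isMinExponent_single one_ne_zero

variable [AddCommMonoid B] [LinearOrder B] [IsOrderedCancelAddMonoid B]

theorem IsMinExponent.mul [NoZeroDivisors R] [Add A] (hD : D.Injective)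
    (hadd : ∀ a b, D (a + b) = D a + D b) (hf : IsMinExponent D f a) (hg : IsMinExponent D g b) :
    IsMinExponent D (f * g) (a + b) := by
  classical
  have hunique : UniqueAdd f.coeff.support g.coeff.support a b := by
    intro a' b' ha' hb' hsum
    have heq := (add_eq_add_iff_eq_and_eq (hf.2 a' ha') (hg.2 b' hb')).1
      (by rw [← hadd, ← hadd, hsum])
    exact ⟨hD heq.1.symm, hD heq.2.symm⟩
  refine ⟨?_, fun c hc => ?_⟩
  · rw [Finsupp.mem_support_iff, coeff_mul_add_of_uniqueAdd hunique]
    exact mul_ne_zero (Finsupp.mem_support_iff.1 hf.1) (Finsupp.mem_support_iff.1 hg.1)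
  · obtain ⟨a', ha', b', hb', rfl⟩ := Finset.mem_add.1 (support_coeff_mul_subset f g hc)
    rw [hadd, hadd]
    exact add_le_add (hf.2 a' ha') (hg.2 b' hb')

theorem IsMinExponent.pow [Nontrivial R] [NoZeroDivisors R] [AddMonoid A] (hD : D.Injective)
    (hadd : ∀ a b, D (a + b) = D a + D b) (h : IsMinExponent D f a) (k : ℕ) :
    IsMinExponent D (f ^ k) (k • a) := by
  induction k with
  | zero => simpa using isMinExponent_one
  | succ k ih => simpa [pow_succ, succ_nsmul] using ih.mul hD hadd h

end Semiring

theorem IsMinExponent.prod [CommSemiring R] [Nontrivial R] [NoZeroDivisors R] [AddCommMonoid A]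
    [AddCommMonoid B] [LinearOrder B] [IsOrderedCancelAddMonoid B] {D : A → B}
    (hD : D.Injective) (hadd : ∀ a b, D (a + b) = D a + D b) {ι : Type*} (s : Finset ι)
    {f : ι → R[A]} {a : ι → A} (h : ∀ i ∈ s, IsMinExponent D (f i) (a i)) :
    IsMinExponent D (∏ i ∈ s, f i) (∑ i ∈ s, a i) := by
  induction s using Finset.cons_induction with
  | empty => simpa using isMinExponent_one
  | cons i s his ih =>
    rw [Finset.prod_cons, Finset.sum_cons]
    exact (h i (Finset.mem_cons_self i s)).mul hD hadd
      (ih fun j hj => h j (Finset.mem_cons_of_mem hj))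

theorem IsMinExponent.mapDomain [Semiring R] [LE B] [LE B'] {D : A → B} {D' : A' → B'}
    {φ : A → A'} (hφ : φ.Injective) (hmono : ∀ a b, D a ≤ D b → D' (φ a) ≤ D' (φ b))
    {f : R[A]} {a : A} (h : IsMinExponent D f a) :
    IsMinExponent D' (AddMonoidAlgebra.mapDomain φ f) (φ a) := by
  classical
  have hsupp : (AddMonoidAlgebra.mapDomain φ f).coeff.support = f.coeff.support.image φ :=
    Finsupp.mapDomain_support_of_injective hφ f.coeff
  refine ⟨hsupp ▸ Finset.mem_image_of_mem φ h.1, fun b hb => ?_⟩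
  obtain ⟨c, hc, rfl⟩ := Finset.mem_image.1 (hsupp ▸ hb)
  exact hmono a c (h.2 c hc)

end AddMonoidAlgebra

theorem Finsupp.toLex_mapRange_le_toLex_mapRange {α N N' : Type*} [LinearOrder α] [Zero N]
    [Zero N'] [PartialOrder N] [PartialOrder N'] {e : N → N'} (he : StrictMono e) (he0 : e 0 = 0)
    {x y : α →₀ N} (h : toLex x ≤ toLex y) :
    toLex (x.mapRange e he0) ≤ toLex (y.mapRange e he0) := by
  rcases h.lt_or_eq with hlt | heq
  · obtain ⟨j, hpre, hj⟩ := Finsupp.Lex.lt_iff.1 hlt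
    refine (Finsupp.Lex.lt_iff.2 ⟨j, fun d hd => ?_, ?_⟩).le
    · simpa using congrArg e (hpre d hd)
    · simpa using he hj
  · rw [toLex.injective heq]

section StandardMonomial

variable {n : ℕ}

/-- The exponent of the lex-smallest monomial of `x^{(a)}` when each `x'_i` has lex-smallest
monomial `x^{w_i} / x_i`: it is `a + ∑_{a_i < 0} (-a_i) w_i`. -/
noncomputable def stdMonMinExponent (w : Fin n → Fin n →₀ ℤ) (a : Fin n → ℤ) : Fin n →₀ ℤ :=
  ∑ i, (Finsupp.single i (a i) + (-a i).toNat • w i)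

theorem stdMonMinExponent_apply (w : Fin n → Fin n →₀ ℤ) (a : Fin n → ℤ) (j : Fin n) :
    stdMonMinExponent w a j = a j + ∑ i, ((-a i).toNat : ℤ) * w i j := by
  simp [stdMonMinExponent, Finset.sum_add_distrib, Finsupp.single_apply]

theorem toLex_stdMonMinExponent_lt {w : Fin n → Fin n →₀ ℤ} (hw : ∀ i, ∀ j ≤ i, w i j = 0)
    {a a' : Fin n → ℤ} (h : toLex a < toLex a') :
    toLex (stdMonMinExponent w a) < toLex (stdMonMinExponent w a') := by
  obtain ⟨k, hpre, hk⟩ := h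
  replace hpre : ∀ j < k, a j = a' j := hpre
  have hcorr : ∀ j ≤ k, ∑ i, ((-a i).toNat : ℤ) * w i j = ∑ i, ((-a' i).toNat : ℤ) * w i j := by
    refine fun j hj => Finset.sum_congr rfl fun i _ => ?_
    rcases lt_or_ge i j with hij | hji
    · rw [hpre i (hij.trans_le hj)]
    · simp [hw i j hji]
  refine Finsupp.Lex.lt_iff.2 ⟨k, fun j hj => ?_, ?_⟩
  · simp only [ofLex_toLex, stdMonMinExponent_apply, hcorr j hj.le, hpre j hj]
  · simp only [ofLex_toLex, stdMonMinExponent_apply, hcorr k le_rfl]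
    exact add_lt_add_left hk _

theorem isMinExponent_polyToLaurent {R : Type*} [CommRing R] {p : MvPolynomial (Fin n) R}
    {m : Fin n →₀ ℕ} (h : IsMinExponent toLex p m) :
    IsMinExponent toLex (polyToLaurent R n p) (m.mapRange Nat.cast Nat.cast_zero) :=
  h.mapDomain (Finsupp.mapRange_injective _ _ Nat.cast_injective)
    fun _ _ => Finsupp.toLex_mapRange_le_toLex_mapRange Nat.strictMono_cast _

theorem isMinExponent_stdMonL {R : Type*} [CommRing R] [IsDomain R] {x' : Fin n → MvLaurent R n}
    {w : Fin n → Fin n →₀ ℤ}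
    (hx' : ∀ i, IsMinExponent toLex (x' i) (w i + Finsupp.single i (-1))) (a : Fin n → ℤ) :
    IsMinExponent toLex (stdMonL x' a) (stdMonMinExponent w a) := by
  refine IsMinExponent.prod (A := Fin n →₀ ℤ) toLex.injective (fun _ _ => rfl) _ fun i _ => ?_
  split_ifs with hi
  · have hxL : IsMinExponent toLex (xL i : MvLaurent R n) (Finsupp.single i 1) :=
      isMinExponent_single one_ne_zero
    convert hxL.pow toLex.injective (fun _ _ => rfl) (a i).toNat using 1
    rw [Int.toNat_eq_zero.2 (by omega), zero_smul, add_zero, Finsupp.smul_single, nsmul_one,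
      Int.toNat_of_nonneg hi]
  · convert (hx' i).pow toLex.injective (fun _ _ => rfl) (-a i).toNat using 1
    ext j
    simp [Finsupp.single_apply]
    split_ifs <;> omega

end StandardMonomial

theorem statement8_general {R : Type*} [CommRing R] [IsDomain R]
    {n : ℕ}
    (F : Fin n → MvPolynomial (Fin n) R)
    -- `x'_j = F_j / x_j = F_j · x_j^{-1}` as a Laurent polynomial (encoding `F̂_j = F_j`)
    (x' : Fin n → MvLaurent R n)
    (hx' : ∀ j, x' j =
      polyToLaurent R n (F j) * AddMonoidAlgebra.single (Finsupp.single j (-1 : ℤ)) (1 : R))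
    -- `v j` is the lexicographically smallest monomial of `F j`
    (v : Fin n → (Fin n →₀ ℕ))
    (hvmem : ∀ j, v j ∈ (F j).support)
    (hvmin : ∀ j, ∀ m ∈ (F j).support, toLex (v j) ≤ toLex m)
    -- and it only involves the variables `x_i` with `i > j`
    (hvform : ∀ j, ∀ i ≤ j, v j i = 0) :
    (∀ a : Fin n → ℤ, stdMonL x' a ≠ 0) ∧
    (∀ a a' : Fin n → ℤ, toLex a < toLex a' →
      ∀ m m' : Fin n →₀ ℤ,
        (m ∈ (stdMonL x' a).coeff.support ∧ ∀ l ∈ (stdMonL x' a).coeff.support, toLex m ≤ toLex l) →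
        (m' ∈ (stdMonL x' a').coeff.support ∧ ∀ l ∈ (stdMonL x' a').coeff.support, toLex m' ≤ toLex l) →
        toLex m < toLex m') := by
  set w : Fin n → Fin n →₀ ℤ := fun i => (v i).mapRange Nat.cast Nat.cast_zero
  have hx'min (i : Fin n) : IsMinExponent toLex (x' i) (w i + Finsupp.single i (-1)) := by
    rw [hx' i]
    exact (isMinExponent_polyToLaurent ⟨hvmem i, hvmin i⟩).mul toLex.injective (fun _ _ => rfl)
      (isMinExponent_single one_ne_zero)
  have hmin := isMinExponent_stdMonL hx'min
  have hw : ∀ i, ∀ j ≤ i, w i j = 0 := fun i j hj => by simp [w, hvform i j hj]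
  refine ⟨fun a => (hmin a).ne_zero, fun a a' hlt m m' hm hm' => ?_⟩
  rw [IsMinExponent.unique toLex.injective hm (hmin a),
    IsMinExponent.unique toLex.injective hm' (hmin a')]
  exact toLex_stdMonMinExponent_lt hw hlt

/-- Under `F̂_j = F_j` and the hypothesis that the lex-smallest monomial of
each `F_j` only involves the variables `x_i` with `i > j` (so it is `1` for `j = n`), every
standard monomial `x^{(a)}` is a nonzero Laurent polynomial, and if `a ≺ a'` lexicographically
then the lex-smallest monomial of `x^{(a)}` strictly precedes that of `x^{(a')}`. -/
theorem statement8 {R : Type*} [CommRing R] [IsDomain R] [UniqueFactorizationMonoid R]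
    {n : ℕ} [NeZero n]
    (F : Fin n → MvPolynomial (Fin n) R)
    -- `F j` does not involve `x_j`
    (hFx : ∀ j, ∀ m ∈ (F j).support, m j = 0)
    -- each `F j` is irreducible in `R[x_1,…,x_n]`
    (hFirr : ∀ j, Irreducible (F j))
    -- no `F j` is divisible by a variable
    (hFvar : ∀ j i, ¬ (MvPolynomial.X i ∣ F j))
    -- `x'_j = F_j / x_j = F_j · x_j^{-1}` as a Laurent polynomial (encoding `F̂_j = F_j`)
    (x' : Fin n → MvLaurent R n)
    (hx' : ∀ j, x' j =
      polyToLaurent R n (F j) * AddMonoidAlgebra.single (Finsupp.single j (-1 : ℤ)) (1 : R))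
    -- `v j` is the lexicographically smallest monomial of `F j`
    (v : Fin n → (Fin n →₀ ℕ))
    (hvmem : ∀ j, v j ∈ (F j).support)
    (hvmin : ∀ j, ∀ m ∈ (F j).support, toLex (v j) ≤ toLex m)
    -- and it only involves the variables `x_i` with `i > j`
    (hvform : ∀ j, ∀ i ≤ j, v j i = 0) :
    (∀ a : Fin n → ℤ, stdMonL x' a ≠ 0) ∧
    (∀ a a' : Fin n → ℤ, toLex a < toLex a' →
      ∀ m m' : Fin n →₀ ℤ,
        (m ∈ (stdMonL x' a).coeff.support ∧ ∀ l ∈ (stdMonL x' a).coeff.support, toLex m ≤ toLex l) →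
        (m' ∈ (stdMonL x' a').coeff.support ∧ ∀ l ∈ (stdMonL x' a').coeff.support, toLex m' ≤ toLex l) →
        toLex m < toLex m') :=
  statement8_general F x' hx' v hvmem hvmin hvform
end

section
/- Assume Condition 1.2 and n ≥ 2. Then R[x_1, x_2^{±1},…,x_n^{±1}] ∩ R[x_1^{±1}, x_2, x'_2,…,x_n, x'_n] = R[x_1, x_2, x'_2,…,x_n, x'_n], as R-subalgebras of 𝔽; here R[x_1, x_2^{±1},…,x_n^{±1}] is generated by x_1 and x_i, x_i^{-1} (i ∈ [2,n]), R[x_1^{±1}, x_2, x'_2,…,x_n, x'_n] is generated by x_1, x_1^{-1} and x_i, x'_i (i ∈ [2,n]), and R[x_1, x_2, x'_2,…,x_n, x'_n] is generated by x_1 and x_i, x'_i (i ∈ [2,n]). -/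
/-!
Write `x'_j = F_j / x_j` and `A = R[x_1, …, x_n][x'_j : j ≠ 1]`, the right-hand side. An element
of `R[x_1^{±1}, x_2, x'_2, …]` lands in `A` after multiplication by a power of `x_1`, so it suffices
to show that `x_1 y ∈ A` forces `y ∈ A` when `y` only has monomial denominators in
`x_2, …, x_n`. Modulo `x_1 A`, the relations `x_j x'_j = F_j` rewrite every element of `A` as a
combination of standard monomials `x^d x'^t`: no factor `x_j x'_j` and no `x_1`. Clearing the
denominator `x^B`, such a combination becomes `∑ c_t F^t x^{B - t}`. By condition (ii) the
lexicographically smallest monomials of its terms are pairwise distinct, and none involves `x_1`,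
so the combination is divisible by `x_1` only if it vanishes.
-/

open MvPolynomial

namespace MvPolynomial

section LexMin

variable {R σ : Type*} [CommRing R] [LinearOrder σ]

/-- The lexicographically smallest exponent of `f`; junk value `0` for `f = 0`. -/
noncomputable def lexMin (f : MvPolynomial σ R) : σ →₀ ℕ :=
  if h : f.support.Nonempty then ofLex ((f.support.image toLex).min' (h.image _)) else 0

theorem lexMin_mem_support {f : MvPolynomial σ R} (hf : f ≠ 0) : f.lexMin ∈ f.support := by
  have h : f.support.Nonempty := support_nonempty.2 hf
  obtain ⟨d, hd, hd'⟩ := Finset.mem_image.1 (Finset.min'_mem _ (h.image toLex))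
  rwa [lexMin, dif_pos h, ← hd']

theorem toLex_lexMin_le {f : MvPolynomial σ R} {d : σ →₀ ℕ} (hd : d ∈ f.support) :
    toLex f.lexMin ≤ toLex d := by
  rw [lexMin, dif_pos ⟨d, hd⟩]
  exact Finset.min'_le _ _ (Finset.mem_image_of_mem _ hd)

theorem lexMin_eq_of_mem_support {f : MvPolynomial σ R} {d : σ →₀ ℕ} (hd : d ∈ f.support)
    (hmin : ∀ e ∈ f.support, toLex d ≤ toLex e) : f.lexMin = d :=
  toLex.injective <| (toLex_lexMin_le hd).antisymm <|
    hmin _ (lexMin_mem_support (by rintro rfl; simp at hd))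

theorem lexMin_monomial (d : σ →₀ ℕ) {c : R} (hc : c ≠ 0) : (monomial d c).lexMin = d := by
  classical
  refine lexMin_eq_of_mem_support (by simp [support_monomial, hc]) fun e he => ?_
  rw [support_monomial, if_neg hc, Finset.mem_singleton] at he
  rw [he]

theorem lexMin_one [Nontrivial R] : (1 : MvPolynomial σ R).lexMin = 0 :=
  lexMin_monomial 0 one_ne_zero

theorem lexMin_mul [IsDomain R] {f g : MvPolynomial σ R} (hf : f ≠ 0) (hg : g ≠ 0) :
    (f * g).lexMin = f.lexMin + g.lexMin := by
  classical
  have hunique : UniqueAdd f.support g.support f.lexMin g.lexMin := by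
    intro a b ha hb hab
    have h₁ := toLex_lexMin_le ha
    have h₂ := toLex_lexMin_le hb
    have hab' : toLex a + toLex b = toLex f.lexMin + toLex g.lexMin := congrArg toLex hab
    constructor
    · refine toLex.injective (h₁.antisymm' ?_)
      by_contra! h
      exact (add_lt_add_of_lt_of_le h h₂).ne' hab'
    · refine toLex.injective (h₂.antisymm' ?_)
      by_contra! h
      exact (add_lt_add_of_le_of_lt h₁ h).ne' hab'
  have hcoeff : coeff (f.lexMin + g.lexMin) (f * g) ≠ 0 := by
    rw [coeff, AddMonoidAlgebra.coeff_mul_add_of_uniqueAdd hunique]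
    exact mul_ne_zero (mem_support_iff.1 (lexMin_mem_support hf))
      (mem_support_iff.1 (lexMin_mem_support hg))
  refine lexMin_eq_of_mem_support (mem_support_iff.2 hcoeff) fun e he => ?_
  obtain ⟨a, ha, b, hb, rfl⟩ := Finset.mem_add.1 (support_mul f g he)
  exact add_le_add (toLex_lexMin_le ha) (toLex_lexMin_le hb)

theorem lexMin_pow [IsDomain R] {f : MvPolynomial σ R} (hf : f ≠ 0) (e : ℕ) :
    (f ^ e).lexMin = e • f.lexMin := by
  induction e with
  | zero => rw [pow_zero, lexMin_one, zero_smul]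
  | succ e ih => rw [pow_succ, lexMin_mul (pow_ne_zero e hf) hf, ih, succ_nsmul]

theorem lexMin_prod [IsDomain R] {ι : Type*} (s : Finset ι) {f : ι → MvPolynomial σ R}
    (hf : ∀ i ∈ s, f i ≠ 0) : (∏ i ∈ s, f i).lexMin = ∑ i ∈ s, (f i).lexMin := by
  induction s using Finset.cons_induction with
  | empty => rw [Finset.prod_empty, Finset.sum_empty, lexMin_one]
  | cons a s has ih =>
    rw [Finset.forall_mem_cons] at hf
    rw [Finset.prod_cons, Finset.sum_cons, lexMin_mul hf.1 (Finset.prod_ne_zero_iff.2 hf.2),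
      ih hf.2]

theorem lexMin_finsuppProd_pow [IsDomain R] {α : Type*} (t : α →₀ ℕ)
    {f : α → MvPolynomial σ R} (hf : ∀ j, f j ≠ 0) :
    (t.prod fun j e => f j ^ e).lexMin = t.sum fun j e => e • (f j).lexMin := by
  rw [Finsupp.prod, lexMin_prod _ fun j _ => pow_ne_zero _ (hf j)]
  exact Finset.sum_congr rfl fun j _ => lexMin_pow (hf j) _

theorem exists_lexMin_mem_support_sum {ι : Type*} {s : Finset ι} (hs : s.Nonempty)
    {f : ι → MvPolynomial σ R} (hf : ∀ i ∈ s, f i ≠ 0)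
    (hinj : Set.InjOn (fun i => (f i).lexMin) s) :
    ∃ i ∈ s, (f i).lexMin ∈ (∑ j ∈ s, f j).support := by
  obtain ⟨i, hi, hmin⟩ := s.exists_min_image (fun i => toLex (f i).lexMin) hs
  refine ⟨i, hi, ?_⟩
  rw [mem_support_iff, coeff_sum, Finset.sum_eq_single_of_mem i hi]
  · exact mem_support_iff.1 (lexMin_mem_support (hf i hi))
  · intro j hj hji
    by_contra hne
    have hle := (toLex_lexMin_le (mem_support_iff.2 hne)).antisymm (hmin j hj)
    exact hji (hinj hj hi (toLex.injective hle))

end LexMin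

theorem apply_ne_zero_of_X_dvd {R σ : Type*} [CommSemiring R] {i : σ} {g : MvPolynomial σ R}
    (h : X i ∣ g) {d : σ →₀ ℕ} (hd : d ∈ g.support) : d i ≠ 0 := by
  classical
  obtain ⟨g, rfl⟩ := h
  rw [mem_support_iff, coeff_X_mul'] at hd
  split_ifs at hd with hi
  · exact Finsupp.mem_support_iff.1 hi
  · exact absurd rfl hd

theorem monomial_eq_X_mul {R σ : Type*} [CommSemiring R] {d : σ →₀ ℕ} {i : σ} (h : d i ≠ 0)
    (c : R) : monomial d c = X i * monomial (d - Finsupp.single i 1) c := by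
  conv_lhs =>
    rw [← add_tsub_cancel_of_le (Finsupp.single_le_iff.2 (Nat.one_le_iff_ne_zero.2 h))]
  rw [monomial_single_add, pow_one]

end MvPolynomial

theorem Finsupp.sub_single_one_lt {α : Type*} {t : α →₀ ℕ} {j : α} (h : t j ≠ 0) :
    t - Finsupp.single j 1 < t :=
  lt_of_le_of_ne tsub_le_self fun heq => by
    have := DFunLike.congr_fun heq j
    rw [Finsupp.tsub_apply, Finsupp.single_eq_same] at this
    omega

namespace Subalgebra

variable {R K : Type*} [CommSemiring R] [CommSemiring K] [Algebra R K]

def withDenominators (A : Subalgebra R K) (M : Submonoid K) (hM : ∀ m ∈ M, m ∈ A) :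
    Subalgebra R K where
  carrier := {y | ∃ m ∈ M, m * y ∈ A}
  mul_mem' := by
    rintro y z ⟨m, hm, hmy⟩ ⟨n, hn, hnz⟩
    exact ⟨m * n, M.mul_mem hm hn, by simpa only [mul_mul_mul_comm] using A.mul_mem hmy hnz⟩
  add_mem' := by
    rintro y z ⟨m, hm, hmy⟩ ⟨n, hn, hnz⟩
    refine ⟨m * n, M.mul_mem hm hn, ?_⟩
    rw [show m * n * (y + z) = n * (m * y) + m * (n * z) by ring]
    exact A.add_mem (A.mul_mem (hM n hn) hmy) (A.mul_mem (hM m hm) hnz)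
  algebraMap_mem' r := ⟨1, M.one_mem, by rw [one_mul]; exact A.algebraMap_mem r⟩

theorem le_withDenominators {A : Subalgebra R K} {M : Submonoid K} {hM : ∀ m ∈ M, m ∈ A} :
    A ≤ A.withDenominators M hM :=
  fun y hy => ⟨1, M.one_mem, by rwa [one_mul]⟩

end Subalgebra

theorem Algebra.adjoin_union_iUnion_pair_le {R K ι : Type*} [CommSemiring R] [CommSemiring K]
    [Algebra R K] {S : Subalgebra R K} {s : Set K} {o : ι} {b c : ι → K} (hs : s ⊆ S)
    (hbc : ∀ i ≠ o, b i ∈ S ∧ c i ∈ S) :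
    Algebra.adjoin R (s ∪ ⋃ i ∈ {i | i ≠ o}, {b i, c i}) ≤ S :=
  Algebra.adjoin_le <| Set.union_subset hs <| Set.iUnion₂_subset fun i hi =>
    Set.insert_subset_iff.2 ⟨(hbc i hi).1, Set.singleton_subset_iff.2 (hbc i hi).2⟩

section Exchange

variable {R σ : Type*} (K : Type*) [CommRing R] [Field K] [Algebra (MvPolynomial σ R) K]

theorem algebraMap_X_ne_zero [IsDomain R] [IsFractionRing (MvPolynomial σ R) K] (i : σ) :
    algebraMap (MvPolynomial σ R) K (X i) ≠ 0 :=
  (map_ne_zero_iff _ (IsFractionRing.injective (MvPolynomial σ R) K)).2 (X_ne_zero i)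

variable (F : σ → MvPolynomial σ R) (o : σ)

noncomputable def exchangeVar (k : σ) : K :=
  algebraMap (MvPolynomial σ R) K (F k) / algebraMap (MvPolynomial σ R) K (X k)

theorem algebraMap_X_mul_exchangeVar [IsDomain R] [IsFractionRing (MvPolynomial σ R) K]
    (k : σ) :
    algebraMap (MvPolynomial σ R) K (X k) * exchangeVar K F k =
      algebraMap (MvPolynomial σ R) K (F k) :=
  mul_div_cancel₀ _ (algebraMap_X_ne_zero K k)

noncomputable def exchangeEval :
    MvPolynomial {j // j ≠ o} (MvPolynomial σ R) →ₐ[MvPolynomial σ R] K :=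
  aeval fun j => exchangeVar K F j

theorem exchangeEval_C (p : MvPolynomial σ R) :
    exchangeEval K F o (C p) = algebraMap (MvPolynomial σ R) K p :=
  aeval_C _ _

theorem exchangeEval_X (j : {j // j ≠ o}) : exchangeEval K F o (X j) = exchangeVar K F j :=
  aeval_X _ _

theorem algebraMap_mem_range_exchangeEval (p : MvPolynomial σ R) :
    algebraMap (MvPolynomial σ R) K p ∈ (exchangeEval K F o).range :=
  exchangeEval_C K F o p ▸ AlgHom.mem_range_self _ _

/-- `w` is a combination of standard monomials `x^d x'^t`, i.e. without a factor `x_j x'_j`,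
none of which involves `x_o`. -/
def IsStandard (w : MvPolynomial {j // j ≠ o} (MvPolynomial σ R)) : Prop :=
  ∀ t ∈ w.support, ∀ d ∈ (coeff t w).support, d o = 0 ∧ ∀ j : {j // j ≠ o}, t j ≠ 0 → d j = 0

variable {o} in
theorem IsStandard.add {w w' : MvPolynomial {j // j ≠ o} (MvPolynomial σ R)}
    (hw : IsStandard o w) (hw' : IsStandard o w') : IsStandard o (w + w') := by
  classical
  intro t _ d hd
  rw [coeff_add] at hd
  rcases Finset.mem_union.1 (support_add hd) with hd | hd
  · exact hw t (mem_support_iff.2 fun h => by simp [h] at hd) d hd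
  · exact hw' t (mem_support_iff.2 fun h => by simp [h] at hd) d hd

variable {o} in
theorem isStandard_zero : IsStandard o (0 : MvPolynomial {j // j ≠ o} (MvPolynomial σ R)) := by
  intro t ht
  simp at ht

variable {o} in
theorem isStandard_monomial_monomial {t : {j // j ≠ o} →₀ ℕ} {d : σ →₀ ℕ} (hdo : d o = 0)
    (hd : ∀ j : {j // j ≠ o}, t j ≠ 0 → d j = 0) (c : R) :
    IsStandard o (monomial t (monomial d c)) := by
  classical
  intro t' ht' d' hd'
  obtain rfl : t' = t := by simpa using support_monomial_subset ht'
  rw [coeff_monomial, if_pos rfl] at hd'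
  obtain rfl : d' = d := by simpa using support_monomial_subset hd'
  exact ⟨hdo, hd⟩

/-- `y` is congruent modulo `x_o · (exchangeEval K F o).range` to the value of a standard `w₂`. -/
def HasStandardRep (y : K) : Prop :=
  ∃ w₁ w₂, IsStandard o w₂ ∧
    y = algebraMap (MvPolynomial σ R) K (X o) * exchangeEval K F o w₁ + exchangeEval K F o w₂

variable {K F o} in
theorem HasStandardRep.add {y z : K} (hy : HasStandardRep K F o y)
    (hz : HasStandardRep K F o z) : HasStandardRep K F o (y + z) := by
  obtain ⟨w₁, w₂, hw₂, rfl⟩ := hy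
  obtain ⟨w₁', w₂', hw₂', rfl⟩ := hz
  exact ⟨w₁ + w₁', w₂ + w₂', hw₂.add hw₂', by simp only [map_add]; ring⟩

/-- `x^B · exchangeEval K F o w` as a polynomial, when `B` bounds the support of `w`
(`algebraMap_exchangeNumerator`). -/
noncomputable def exchangeNumerator (w : MvPolynomial {j // j ≠ o} (MvPolynomial σ R))
    (B : {j // j ≠ o} →₀ ℕ) : MvPolynomial σ R :=
  ∑ t ∈ w.support, coeff t w * (t.prod fun j e => F j ^ e) *
    monomial ((B - t).mapDomain Subtype.val) 1

/-- The lexicographically smallest exponent of the `t`-th summand of `exchangeNumerator`. -/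
noncomputable def exchangeExponent [LinearOrder σ]
    (w : MvPolynomial {j // j ≠ o} (MvPolynomial σ R)) (B t : {j // j ≠ o} →₀ ℕ) : σ →₀ ℕ :=
  (coeff t w).lexMin + (t.sum fun j e => e • (F j).lexMin) + (B - t).mapDomain Subtype.val

/-- At the first index `κ` where `t < t'` differ, condition (ii) makes the `F`-contributions
agree, standardness kills the `x_κ`-exponent of the coefficient of `x'^{t'}`, and the factors
`x^{B - t}`, `x^{B - t'}` then disagree. -/
theorem injOn_exchangeExponent [LinearOrder σ] (htri : ∀ k i, i ≤ k → (F k).lexMin i = 0)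
    {w : MvPolynomial {j // j ≠ o} (MvPolynomial σ R)} (hw : IsStandard o w)
    {B : {j // j ≠ o} →₀ ℕ} (hB : ∀ t ∈ w.support, t ≤ B) :
    Set.InjOn (exchangeExponent F o w B) w.support := by
  suffices H : ∀ t ∈ w.support, ∀ t' ∈ w.support, toLex t < toLex t' →
      exchangeExponent F o w B t ≠ exchangeExponent F o w B t' by
    intro t ht t' ht' heq
    by_contra hne
    rcases lt_or_gt_of_ne (toLex.injective.ne hne) with h | h
    exacts [H t ht t' ht' h heq, H t' ht' t ht h heq.symm]
  intro t ht t' ht' hlt heq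
  obtain ⟨κ, hbelow, hκ⟩ : ∃ κ, (∀ j < κ, t j = t' j) ∧ t κ < t' κ := Finsupp.Lex.lt_iff.1 hlt
  have hsum_eq : ∀ s : {j // j ≠ o} →₀ ℕ, s.support ⊆ t.support ∪ t'.support →
      (s.sum fun j e => e • (F j).lexMin) κ =
        ∑ j ∈ t.support ∪ t'.support, s j * (F j).lexMin κ := by
    intro s hs
    rw [Finsupp.sum_apply, Finsupp.sum_of_support_subset s hs _
      fun _ _ => by rw [zero_smul, Finsupp.coe_zero, Pi.zero_apply]]
    simp only [Finsupp.smul_apply, smul_eq_mul]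
  have hsum : (t.sum fun j e => e • (F j).lexMin) κ =
      (t'.sum fun j e => e • (F j).lexMin) κ := by
    rw [hsum_eq t Finset.subset_union_left, hsum_eq t' Finset.subset_union_right]
    refine Finset.sum_congr rfl fun j _ => ?_
    rcases lt_or_ge j κ with hj | hj
    · rw [hbelow j hj]
    · rw [htri j κ hj, mul_zero, mul_zero]
  have hstd : (coeff t' w).lexMin κ = 0 :=
    (hw t' ht' _ (lexMin_mem_support (mem_support_iff.1 ht'))).2 κ (by omega)
  have hcoord := DFunLike.congr_fun heq (κ : σ)
  simp only [exchangeExponent, Finsupp.add_apply, Finsupp.mapDomain_apply Subtype.val_injective,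
    Finsupp.tsub_apply, hsum, hstd] at hcoord
  have := hB t' ht' κ
  omega

variable (R) in
noncomputable def avoidingMonomials : Submonoid K where
  carrier := {m | ∃ μ : σ →₀ ℕ, μ o = 0 ∧ algebraMap (MvPolynomial σ R) K (monomial μ 1) = m}
  mul_mem' := by
    rintro _ _ ⟨μ, hμ, rfl⟩ ⟨ν, hν, rfl⟩
    exact ⟨μ + ν, by rw [Finsupp.add_apply, hμ, hν], by rw [← map_mul, monomial_mul, one_mul]⟩
  one_mem' := ⟨0, rfl, by rw [monomial_zero', C_1, map_one]⟩

variable (R) in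
/-- `R[x_o, x_j^{±1} (j ≠ o)]`, as an algebra over `R[x]`. -/
noncomputable def laurentExcept : Subalgebra (MvPolynomial σ R) K :=
  (⊥ : Subalgebra (MvPolynomial σ R) K).withDenominators (avoidingMonomials R K o)
    fun _ ⟨_, _, hm⟩ => hm ▸ Subalgebra.algebraMap_mem _ _

theorem algebraMap_mem_laurentExcept (p : MvPolynomial σ R) :
    algebraMap (MvPolynomial σ R) K p ∈ laurentExcept R K o :=
  Subalgebra.le_withDenominators (Subalgebra.algebraMap_mem _ _)

variable [IsDomain R] [IsFractionRing (MvPolynomial σ R) K]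

theorem exchangeEval_monomial_X_mul {t : {j // j ≠ o} →₀ ℕ} {j : {j // j ≠ o}} (ht : t j ≠ 0)
    (p : MvPolynomial σ R) :
    exchangeEval K F o (monomial t (X (j : σ) * p)) =
      exchangeEval K F o (monomial (t - Finsupp.single j 1) (F j * p)) := by
  obtain ⟨s, rfl⟩ : ∃ s, t = s + Finsupp.single j 1 :=
    ⟨_, (tsub_add_cancel_of_le (Finsupp.single_le_iff.2 (Nat.one_le_iff_ne_zero.2 ht))).symm⟩
  rw [add_tsub_cancel_right, monomial_add_single, pow_one, ← C_mul_monomial, ← C_mul_monomial]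
  simp only [map_mul, exchangeEval_C, exchangeEval_X, ← algebraMap_X_mul_exchangeVar K F j]
  ring

theorem hasStandardRep_monomial (t : {j // j ≠ o} →₀ ℕ) (p : MvPolynomial σ R) :
    HasStandardRep K F o (exchangeEval K F o (monomial t p)) := by
  induction t using WellFoundedLT.induction generalizing p with
  | _ t ih =>
  induction p using MvPolynomial.induction_on' with
  | add p q hp hq => rw [map_add, map_add]; exact hp.add hq
  | monomial d c =>
    by_cases hdo : d o = 0
    · by_cases hd : ∀ j : {j // j ≠ o}, t j ≠ 0 → d j = 0
      · exact ⟨0, _, isStandard_monomial_monomial hdo hd c, by rw [map_zero, mul_zero, zero_add]⟩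
      · push Not at hd
        obtain ⟨j, htj, hdj⟩ := hd
        rw [monomial_eq_X_mul hdj, exchangeEval_monomial_X_mul K F o htj]
        exact ih _ (Finsupp.sub_single_one_lt htj) _
    · refine ⟨monomial t (monomial (d - Finsupp.single o 1) c), 0, isStandard_zero, ?_⟩
      rw [monomial_eq_X_mul hdo, ← C_mul_monomial, map_mul, exchangeEval_C, map_zero, add_zero]

/-- Rewriting `x_j x'_j = F_j` lowers the `x'`-exponent, and monomials divisible by `x_o` are
absorbed into `x_o · (exchangeEval K F o).range`. -/
theorem hasStandardRep (w : MvPolynomial {j // j ≠ o} (MvPolynomial σ R)) :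
    HasStandardRep K F o (exchangeEval K F o w) := by
  induction w using MvPolynomial.induction_on' with
  | monomial t p => exact hasStandardRep_monomial K F o t p
  | add w w' hw hw' => rw [map_add]; exact hw.add hw'

theorem algebraMap_prod_F_pow (t : {j // j ≠ o} →₀ ℕ) :
    algebraMap (MvPolynomial σ R) K (t.prod fun j e => F j ^ e) =
      (t.prod fun j e => exchangeVar K F j ^ e) *
        algebraMap (MvPolynomial σ R) K (monomial (t.mapDomain Subtype.val) 1) := by
  rw [monomial_eq, C_1, one_mul,
    Finsupp.prod_mapDomain_index (fun _ => pow_zero _) (fun _ _ _ => pow_add _ _ _),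
    map_finsuppProd, map_finsuppProd, ← Finsupp.prod_mul]
  refine Finsupp.prod_congr fun j _ => ?_
  rw [map_pow, map_pow, ← mul_pow, mul_comm, algebraMap_X_mul_exchangeVar]

theorem algebraMap_exchangeNumerator {w : MvPolynomial {j // j ≠ o} (MvPolynomial σ R)}
    {B : {j // j ≠ o} →₀ ℕ} (hB : ∀ t ∈ w.support, t ≤ B) :
    algebraMap (MvPolynomial σ R) K (exchangeNumerator F o w B) =
      exchangeEval K F o w *
        algebraMap (MvPolynomial σ R) K (monomial (B.mapDomain Subtype.val) 1) := by
  conv_rhs => rw [w.as_sum, map_sum, Finset.sum_mul]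
  rw [exchangeNumerator, map_sum]
  refine Finset.sum_congr rfl fun t ht => ?_
  have hXB : monomial (t.mapDomain Subtype.val) (1 : R) *
      monomial ((B - t).mapDomain Subtype.val) 1 = monomial (B.mapDomain Subtype.val) 1 := by
    rw [monomial_mul, mul_one, ← Finsupp.mapDomain_add, add_tsub_cancel_of_le (hB t ht)]
  rw [map_mul, map_mul, algebraMap_prod_F_pow, ← hXB, map_mul, exchangeEval, aeval_monomial]
  ring

theorem exchangeEval_range_le : (exchangeEval K F o).range ≤ laurentExcept R K o := by
  rw [exchangeEval, aeval_range]
  refine Algebra.adjoin_le ?_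
  rintro _ ⟨j, rfl⟩
  refine ⟨_, ⟨Finsupp.single (j : σ) 1, Finsupp.single_eq_of_ne j.2.symm, rfl⟩, ?_⟩
  rw [← X, algebraMap_X_mul_exchangeVar]
  exact Algebra.mem_bot.2 ⟨F j, rfl⟩

variable [LinearOrder σ]

theorem exists_mem_support_exchangeNumerator_mul (hF : ∀ k, F k ≠ 0)
    (htri : ∀ k i, i ≤ k → (F k).lexMin i = 0) (ho : IsBot o)
    {w : MvPolynomial {j // j ≠ o} (MvPolynomial σ R)} (hw : IsStandard o w) (hw0 : w ≠ 0)
    {B : {j // j ≠ o} →₀ ℕ} (hB : ∀ t ∈ w.support, t ≤ B) {μ : σ →₀ ℕ} (hμ : μ o = 0) :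
    ∃ d ∈ (exchangeNumerator F o w B * monomial μ 1).support, d o = 0 := by
  have hmono : ∀ s : σ →₀ ℕ, monomial s (1 : R) ≠ 0 :=
    fun s => monomial_eq_zero.not.2 one_ne_zero
  have hprod : ∀ t : {j // j ≠ o} →₀ ℕ, (t.prod fun j e => F j ^ e) ≠ 0 :=
    fun t => Finset.prod_ne_zero_iff.2 fun j _ => pow_ne_zero _ (hF j)
  set term := fun t => coeff t w * (t.prod fun j e => F j ^ e) *
    monomial ((B - t).mapDomain Subtype.val) 1 * monomial μ 1 with hterm_def
  have hterm : ∀ t ∈ w.support, term t ≠ 0 := fun t ht =>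
    mul_ne_zero (mul_ne_zero (mul_ne_zero (mem_support_iff.1 ht) (hprod t)) (hmono _)) (hmono _)
  have hlex : ∀ t ∈ w.support, (term t).lexMin = exchangeExponent F o w B t + μ := by
    intro t ht
    have hc := mem_support_iff.1 ht
    rw [hterm_def, lexMin_mul (mul_ne_zero (mul_ne_zero hc (hprod t)) (hmono _)) (hmono _),
      lexMin_mul (mul_ne_zero hc (hprod t)) (hmono _), lexMin_mul hc (hprod t),
      lexMin_finsuppProd_pow t fun j => hF j, lexMin_monomial _ one_ne_zero,
      lexMin_monomial _ one_ne_zero, exchangeExponent]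
  obtain ⟨t, ht, hmem⟩ := exists_lexMin_mem_support_sum (support_nonempty.2 hw0) hterm
    fun t ht t' ht' h => injOn_exchangeExponent F o htri hw hB ht ht'
      (add_right_cancel (by simpa only [hlex t ht, hlex t' ht'] using h))
  refine ⟨_, by rwa [exchangeNumerator, Finset.sum_mul], ?_⟩
  have hcoeff : (coeff t w).lexMin o = 0 :=
    (hw t ht _ (lexMin_mem_support (mem_support_iff.1 ht))).1
  have hFo : (t.sum fun j e => e • (F j).lexMin) o = 0 := by
    simp [Finsupp.sum_apply, htri _ o (ho _)]
  have hBo : (B - t).mapDomain Subtype.val o = 0 :=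
    Finsupp.mapDomain_of_notMem_range _ _ fun ⟨j, hj⟩ => j.2 hj
  rw [hlex t ht, exchangeExponent, Finsupp.add_apply, Finsupp.add_apply, Finsupp.add_apply,
    hcoeff, hFo, hBo, hμ]

/-- Write `x_o y ≡ exchangeEval w₂` with `w₂` standard; clearing denominators, `x_o` would divide
`exchangeNumerator w₂ B` times a monomial avoiding `x_o`, which forces `w₂ = 0`. -/
theorem mem_range_of_X_mul_mem (hF : ∀ k, F k ≠ 0)
    (htri : ∀ k i, i ≤ k → (F k).lexMin i = 0) (ho : IsBot o) {y : K}
    (hy : y ∈ laurentExcept R K o)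
    (hxy : algebraMap (MvPolynomial σ R) K (X o) * y ∈ (exchangeEval K F o).range) :
    y ∈ (exchangeEval K F o).range := by
  obtain ⟨w, hw⟩ := (AlgHom.mem_range _).1 hxy
  obtain ⟨w₁, w₂, hstd, hdecomp⟩ := hasStandardRep K F o w
  have hz : exchangeEval K F o w₂ =
      algebraMap (MvPolynomial σ R) K (X o) * (y - exchangeEval K F o w₁) := by
    rw [mul_sub, ← hw, hdecomp]
    ring
  obtain ⟨_, ⟨μ, hμo, rfl⟩, hm⟩ :=
    sub_mem hy (exchangeEval_range_le K F o (AlgHom.mem_range_self _ w₁))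
  obtain ⟨p, hp⟩ := Algebra.mem_bot.1 hm
  suffices hw₂ : w₂ = 0 by
    rw [hw₂, map_zero, eq_comm, mul_eq_zero, sub_eq_zero] at hz
    rcases hz with hz | hz
    · exact absurd hz (algebraMap_X_ne_zero K o)
    · exact hz ▸ AlgHom.mem_range_self _ w₁
  by_contra hw₂
  have hB : ∀ t ∈ w₂.support, t ≤ w₂.support.sup id := fun t ht => Finset.le_sup (f := id) ht
  have heq : exchangeNumerator F o w₂ (w₂.support.sup id) * monomial μ 1 =
      X o * (p * monomial ((w₂.support.sup id).mapDomain Subtype.val) 1) := by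
    apply IsFractionRing.injective (MvPolynomial σ R) K
    simp only [map_mul, algebraMap_exchangeNumerator K F o hB, hz, hp]
    ring
  obtain ⟨d, hd, hdo⟩ := exists_mem_support_exchangeNumerator_mul F o hF htri ho hstd hw₂ hB hμo
  exact apply_ne_zero_of_X_dvd (heq ▸ dvd_mul_right _ _) hd hdo

theorem mem_range_of_X_pow_mul_mem (hF : ∀ k, F k ≠ 0)
    (htri : ∀ k i, i ≤ k → (F k).lexMin i = 0) (ho : IsBot o) (N : ℕ) {y : K}
    (hy : y ∈ laurentExcept R K o)
    (hxy : algebraMap (MvPolynomial σ R) K (X o) ^ N * y ∈ (exchangeEval K F o).range) :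
    y ∈ (exchangeEval K F o).range := by
  induction N generalizing y with
  | zero => simpa using hxy
  | succ N ih =>
    rw [pow_succ, mul_assoc] at hxy
    exact mem_range_of_X_mul_mem K F o hF htri ho hy
      (ih (mul_mem (algebraMap_mem_laurentExcept K o _) hy) hxy)

end Exchange

section Adjoin

variable {R σ : Type*} (K : Type*) [CommRing R] [Field K] [Algebra (MvPolynomial σ R) K]
  [Algebra R K] (F : σ → MvPolynomial σ R) (o : σ)

theorem algebraMap_X_mem_adjoin (c : σ → K) (i : σ) :
    algebraMap (MvPolynomial σ R) K (X i) ∈ Algebra.adjoin R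
      ({algebraMap (MvPolynomial σ R) K (X o)} ∪
        ⋃ i ∈ {i | i ≠ o}, {algebraMap (MvPolynomial σ R) K (X i), c i}) := by
  apply Algebra.subset_adjoin
  by_cases hi : i = o
  · exact Or.inl (hi ▸ rfl)
  · exact Or.inr (Set.mem_biUnion hi (Set.mem_insert _ _))

theorem apply_mem_adjoin_of_ne (c : σ → K) {i : σ} (hi : i ≠ o) :
    c i ∈ Algebra.adjoin R
      ({algebraMap (MvPolynomial σ R) K (X o)} ∪
        ⋃ i ∈ {i | i ≠ o}, {algebraMap (MvPolynomial σ R) K (X i), c i}) :=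
  Algebra.subset_adjoin (Or.inr (Set.mem_biUnion hi (Set.mem_insert_of_mem _ rfl)))

variable [IsScalarTower R (MvPolynomial σ R) K]

theorem algebraMap_mem_of_forall_X_mem {S : Subalgebra R K}
    (h : ∀ i, algebraMap (MvPolynomial σ R) K (X i) ∈ S) (p : MvPolynomial σ R) :
    algebraMap (MvPolynomial σ R) K p ∈ S := by
  induction p using MvPolynomial.induction_on with
  | C r =>
    rw [← MvPolynomial.algebraMap_eq, ← IsScalarTower.algebraMap_apply]
    exact S.algebraMap_mem r
  | add p q hp hq => rw [map_add]; exact add_mem hp hq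
  | mul_X p i hp => rw [map_mul]; exact mul_mem hp (h i)

theorem exchangeEval_mem_adjoin (w : MvPolynomial {j // j ≠ o} (MvPolynomial σ R)) :
    exchangeEval K F o w ∈ Algebra.adjoin R
      ({algebraMap (MvPolynomial σ R) K (X o)} ∪
        ⋃ i ∈ {i | i ≠ o}, {algebraMap (MvPolynomial σ R) K (X i), exchangeVar K F i}) := by
  induction w using MvPolynomial.induction_on with
  | C p =>
    rw [exchangeEval_C]
    exact algebraMap_mem_of_forall_X_mem K (algebraMap_X_mem_adjoin K o _) p
  | add w w' hw hw' => rw [map_add]; exact add_mem hw hw'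
  | mul_X w j hw =>
    rw [map_mul, exchangeEval_X]
    exact mul_mem hw (apply_mem_adjoin_of_ne K o _ j.2)

theorem exists_X_pow_mul_mem_range [IsDomain R] [IsFractionRing (MvPolynomial σ R) K] {y : K}
    (hy : y ∈ Algebra.adjoin R
      ({algebraMap (MvPolynomial σ R) K (X o), (algebraMap (MvPolynomial σ R) K (X o))⁻¹} ∪
        ⋃ i ∈ {i | i ≠ o}, {algebraMap (MvPolynomial σ R) K (X i), exchangeVar K F i})) :
    ∃ N : ℕ, algebraMap (MvPolynomial σ R) K (X o) ^ N * y ∈ (exchangeEval K F o).range := by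
  have hM : ∀ m ∈ Submonoid.powers (algebraMap (MvPolynomial σ R) K (X o)),
      m ∈ (exchangeEval K F o).range.restrictScalars R := by
    rintro _ ⟨N, rfl⟩
    exact pow_mem (algebraMap_mem_range_exchangeEval K F o _) N
  have hrange : ∀ p, algebraMap (MvPolynomial σ R) K p ∈
      ((exchangeEval K F o).range.restrictScalars R).withDenominators _ hM :=
    fun p => Subalgebra.le_withDenominators (algebraMap_mem_range_exchangeEval K F o p)
  obtain ⟨_, ⟨N, rfl⟩, hN⟩ := Algebra.adjoin_union_iUnion_pair_le
    (Set.insert_subset_iff.2 ⟨hrange _, Set.singleton_subset_iff.2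
      ⟨_, Submonoid.mem_powers _, by
        rw [mul_inv_cancel₀ (algebraMap_X_ne_zero K o)]
        exact one_mem _⟩⟩)
    (fun i hi => ⟨hrange _, Subalgebra.le_withDenominators
      (exchangeEval_X K F o ⟨i, hi⟩ ▸ AlgHom.mem_range_self _ _)⟩) hy
  exact ⟨N, hN⟩

theorem adjoin_le_laurentExcept [IsDomain R] [IsFractionRing (MvPolynomial σ R) K] :
    Algebra.adjoin R ({algebraMap (MvPolynomial σ R) K (X o)} ∪ ⋃ i ∈ {i | i ≠ o},
      {algebraMap (MvPolynomial σ R) K (X i), (algebraMap (MvPolynomial σ R) K (X i))⁻¹}) ≤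
        (laurentExcept R K o).restrictScalars R :=
  Algebra.adjoin_union_iUnion_pair_le
    (Set.singleton_subset_iff.2 (algebraMap_mem_laurentExcept K o _)) fun i hi =>
      ⟨algebraMap_mem_laurentExcept K o _, _,
        ⟨Finsupp.single i 1, Finsupp.single_eq_of_ne hi.symm, rfl⟩,
        by rw [← X, mul_inv_cancel₀ (algebraMap_X_ne_zero K i)]; exact one_mem _⟩

theorem adjoin_exchangeVar_le_adjoin_inv [IsDomain R] [IsFractionRing (MvPolynomial σ R) K] :
    Algebra.adjoin R ({algebraMap (MvPolynomial σ R) K (X o)} ∪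
        ⋃ i ∈ {i | i ≠ o}, {algebraMap (MvPolynomial σ R) K (X i), exchangeVar K F i}) ≤
      Algebra.adjoin R ({algebraMap (MvPolynomial σ R) K (X o)} ∪ ⋃ i ∈ {i | i ≠ o},
        {algebraMap (MvPolynomial σ R) K (X i), (algebraMap (MvPolynomial σ R) K (X i))⁻¹}) :=
  Algebra.adjoin_union_iUnion_pair_le (Set.subset_union_left.trans Algebra.subset_adjoin)
    fun i hi => ⟨algebraMap_X_mem_adjoin K o _ i, by
      rw [exchangeVar, div_eq_mul_inv]
      exact mul_mem (algebraMap_mem_of_forall_X_mem K (algebraMap_X_mem_adjoin K o _) _)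
        (apply_mem_adjoin_of_ne K o (fun i => (algebraMap (MvPolynomial σ R) K (X i))⁻¹) hi)⟩

end Adjoin

theorem statement11_general {R : Type*} [CommRing R] [IsDomain R]
    {n : ℕ} [NeZero n]
    (F : Fin n → MvPolynomial (Fin n) R)
    -- `x'_k = F_k / x_k` (encoding `F̂_k = F_k`)
    (x' : Fin n → AmbientField R n)
    (hx' : ∀ k, x' k = toAmbient R (F k) / xv R k)
    -- `v k` is the lexicographically smallest monomial `M_k` of `F k`
    (v : Fin n → (Fin n →₀ ℕ))
    (hvmem : ∀ k, v k ∈ (F k).support)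
    (hvmin : ∀ k, ∀ m ∈ (F k).support, toLex (v k) ≤ toLex m)
    -- Condition 1.2 (ii)
    (hcond2 : ∀ k, ∀ i ≤ k, v k i = 0) :
    (Algebra.adjoin R (({xv R 0} : Set (AmbientField R n)) ∪
        ⋃ i ∈ ({i : Fin n | i ≠ 0}), ({xv R i, (xv R i)⁻¹} : Set (AmbientField R n)))) ⊓
      (Algebra.adjoin R (({xv R 0, (xv R 0)⁻¹} : Set (AmbientField R n)) ∪
        ⋃ i ∈ ({i : Fin n | i ≠ 0}), ({xv R i, x' i} : Set (AmbientField R n)))) =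
    Algebra.adjoin R (({xv R 0} : Set (AmbientField R n)) ∪
        ⋃ i ∈ ({i : Fin n | i ≠ 0}), ({xv R i, x' i} : Set (AmbientField R n))) := by
  obtain rfl : x' = exchangeVar (AmbientField R n) F := funext hx'
  have hF : ∀ k, F k ≠ 0 := fun k hk => by simpa [hk] using hvmem k
  have htri : ∀ k i, i ≤ k → (F k).lexMin i = 0 := fun k i hik => by
    rw [lexMin_eq_of_mem_support (hvmem k) (hvmin k)]
    exact hcond2 k i hik
  refine le_antisymm (fun y hy => ?_) (le_inf (adjoin_exchangeVar_le_adjoin_inv _ F 0)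
    (Algebra.adjoin_mono (Set.union_subset_union_left _
      (Set.singleton_subset_iff.2 (Set.mem_insert _ _)))))
  obtain ⟨N, hN⟩ := exists_X_pow_mul_mem_range _ F 0 hy.2
  obtain ⟨w, rfl⟩ := (AlgHom.mem_range _).1 (mem_range_of_X_pow_mul_mem _ F 0 hF htri
    (fun k => Fin.zero_le k) N (adjoin_le_laurentExcept _ 0 hy.1) hN)
  exact exchangeEval_mem_adjoin _ F 0 w

/-- Under Condition 1.2 and `n ≥ 2`,
`R[x_1, x_2^{±1},…,x_n^{±1}] ∩ R[x_1^{±1}, x_2, x'_2,…,x_n, x'_n]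
  = R[x_1, x_2, x'_2,…,x_n, x'_n]`. -/
theorem statement11 {R : Type*} [CommRing R] [IsDomain R] [UniqueFactorizationMonoid R]
    {n : ℕ} [NeZero n] (hn : 2 ≤ n)
    (F : Fin n → MvPolynomial (Fin n) R)
    -- `F k` does not involve `x_k`
    (hFx : ∀ k, ∀ m ∈ (F k).support, m k = 0)
    -- each `F k` is irreducible in `R[x_1,…,x_n]`
    (hFirr : ∀ k, Irreducible (F k))
    -- no `F k` is divisible by a variable
    (hFvar : ∀ k i, ¬ (MvPolynomial.X i ∣ F k))
    -- `x'_k = F_k / x_k` (encoding `F̂_k = F_k`)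
    (x' : Fin n → AmbientField R n)
    (hx' : ∀ k, x' k = toAmbient R (F k) / xv R k)
    -- `v k` is the lexicographically smallest monomial `M_k` of `F k`
    (v : Fin n → (Fin n →₀ ℕ))
    (hvmem : ∀ k, v k ∈ (F k).support)
    (hvmin : ∀ k, ∀ m ∈ (F k).support, toLex (v k) ≤ toLex m)
    -- Condition 1.2 (i)
    (hcond1 : ∀ k j, j ≠ k →
      ¬ (Polynomial.C (F j) ∣
          MvPolynomial.aeval
            (fun i => if i = j then Polynomial.C (F j) * Polynomial.X
                      else Polynomial.C (MvPolynomial.X i)) (F k)))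
    -- Condition 1.2 (ii)
    (hcond2 : ∀ k, ∀ i ≤ k, v k i = 0)
    -- Condition 1.2 (iii)
    (hcond3 : ∀ k, k ≠ 0 → (∃ m ∈ (F k).support, m 0 ≠ 0) →
      ∀ m ∈ (F k).support, m ≠ v k → m 0 ≠ 0)
    -- Condition 1.2 (iv)
    (hcond4 : ∀ k, k ≠ 0 → k ≠ 1 → (∀ m ∈ (F k).support, m 0 = 0) →
      ∀ i : Fin n, i ≠ 0 → i < k → v i k ≠ 0 →
        ∀ m ∈ (F k).support, m ≠ v k → m i ≠ 0) :
    (Algebra.adjoin R (({xv R 0} : Set (AmbientField R n)) ∪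
        ⋃ i ∈ ({i : Fin n | i ≠ 0}), ({xv R i, (xv R i)⁻¹} : Set (AmbientField R n)))) ⊓
      (Algebra.adjoin R (({xv R 0, (xv R 0)⁻¹} : Set (AmbientField R n)) ∪
        ⋃ i ∈ ({i : Fin n | i ≠ 0}), ({xv R i, x' i} : Set (AmbientField R n)))) =
    Algebra.adjoin R (({xv R 0} : Set (AmbientField R n)) ∪
        ⋃ i ∈ ({i : Fin n | i ≠ 0}), ({xv R i, x' i} : Set (AmbientField R n))) :=
  statement11_general F x' hx' v hvmem hvmin hcond2
end
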